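/- arXiv:0904.4457 — 10 statements merged into one kernel-verified Lean document; each statement's English description precedes it below -/
import Mathlib

section
/- Let F ∈ ℂ[x,y,z] be a three-term form of degree d ≥ 3 with power matrix P = (p_ij). If F is irreducible in ℂ[x,y,z] and F is smooth (the only common zero in ℂ³ of the three partial derivatives ∂F/∂x, ∂F/∂y, ∂F/∂z is (0,0,0)), then every row of P contains a zero entry; that is, for each i ∈ {1,2,3} there exists j ∈ {1,2,3} with p_{ij} = 0. -/
open MvPolynomial

lemma key0 (A : ℂ) (a b c : ℕ) (h : 2 ≤ b + c) (j : Fin 3) :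
    eval (fun m : Fin 3 => if m = 0 then (1:ℂ) else 0)
      (pderiv j (C A * (X 0 ^ a * X 1 ^ b * X 2 ^ c))) = 0 := by
  fin_cases j <;> simp [pderiv_C_mul, pderiv_mul, pderiv_pow] <;> refine Or.inr ?_ <;> omega

lemma key1 (A : ℂ) (a b c : ℕ) (h : 2 ≤ a + c) (j : Fin 3) :
    eval (fun m : Fin 3 => if m = 1 then (1:ℂ) else 0)
      (pderiv j (C A * (X 0 ^ a * X 1 ^ b * X 2 ^ c))) = 0 := by
  fin_cases j <;> simp [pderiv_C_mul, pderiv_mul, pderiv_pow] <;> refine Or.inr ?_ <;> omega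

lemma key2 (A : ℂ) (a b c : ℕ) (h : 2 ≤ a + b) (j : Fin 3) :
    eval (fun m : Fin 3 => if m = 2 then (1:ℂ) else 0)
      (pderiv j (C A * (X 0 ^ a * X 1 ^ b * X 2 ^ c))) = 0 := by
  fin_cases j <;> simp [pderiv_C_mul, pderiv_mul, pderiv_pow] <;> refine Or.inr ?_ <;> omega

/-- If a three-term form `F` of degree `d ≥ 3` with power matrix `p`
is irreducible and smooth (the only common zero of its partial derivatives is the
origin), then every row of its power matrix contains a zero. -/
theorem three_term_smooth_row_zero
    (d : ℕ) (hd : 3 ≤ d)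
    (p : Fin 3 → Fin 3 → ℕ) (A : Fin 3 → ℂ) (hA : ∀ i, A i ≠ 0)
    (hdist : Function.Injective fun i : Fin 3 => (p i 0, p i 1, p i 2))
    (hdeg : ∀ i, p i 0 + p i 1 + p i 2 = d)
    (F : MvPolynomial (Fin 3) ℂ)
    (hF : F = C (A 0) * (X 0 ^ p 0 0 * X 1 ^ p 0 1 * X 2 ^ p 0 2)
            + C (A 1) * (X 0 ^ p 1 0 * X 1 ^ p 1 1 * X 2 ^ p 1 2)
            + C (A 2) * (X 0 ^ p 2 0 * X 1 ^ p 2 1 * X 2 ^ p 2 2))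
    (hirr : Irreducible F)
    (hsmooth : ∀ v : Fin 3 → ℂ, (∀ i, eval v (pderiv i F) = 0) → v = 0) :
    ∀ i : Fin 3, ∃ j : Fin 3, p i j = 0 := by
  intro i
  by_contra hno
  push_neg at hno
  have h0 := hdeg 0; have h1 := hdeg 1; have h2 := hdeg 2
  have key : (p 0 0 + 2 ≤ d ∧ p 1 0 + 2 ≤ d ∧ p 2 0 + 2 ≤ d)
      ∨ (p 0 1 + 2 ≤ d ∧ p 1 1 + 2 ≤ d ∧ p 2 1 + 2 ≤ d)
      ∨ (p 0 2 + 2 ≤ d ∧ p 1 2 + 2 ≤ d ∧ p 2 2 + 2 ≤ d) := by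
    have ha := hno 0; have hb := hno 1; have hc := hno 2
    fin_cases i <;> simp only [Fin.isValue, Fin.zero_eta, Fin.mk_one, Fin.reduceFinMk, id] at ha hb hc <;> omega
  rcases key with ⟨k0, k1, k2⟩ | ⟨k0, k1, k2⟩ | ⟨k0, k1, k2⟩
  · have hv := hsmooth (fun m => if m = 0 then (1:ℂ) else 0) (by
      intro j
      rw [hF, map_add, map_add, map_add, map_add,
        key0 _ _ _ _ (by omega) j, key0 _ _ _ _ (by omega) j, key0 _ _ _ _ (by omega) j]
      ring)
    have := congrFun hv 0
    simp at this
  · have hv := hsmooth (fun m => if m = 1 then (1:ℂ) else 0) (by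
      intro j
      rw [hF, map_add, map_add, map_add, map_add,
        key1 _ _ _ _ (by omega) j, key1 _ _ _ _ (by omega) j, key1 _ _ _ _ (by omega) j]
      ring)
    have := congrFun hv 1
    simp at this
  · have hv := hsmooth (fun m => if m = 2 then (1:ℂ) else 0) (by
      intro j
      rw [hF, map_add, map_add, map_add, map_add,
        key2 _ _ _ _ (by omega) j, key2 _ _ _ _ (by omega) j, key2 _ _ _ _ (by omega) j]
      ring)
    have := congrFun hv 2
    simp at this
end

section
/- Let F ∈ ℂ[x,y,z] be a three-term form of degree d ≥ 3 with power matrix P = (p_ij). Assume F is irreducible in ℂ[x,y,z] and smooth (the only common zero in ℂ³ of ∂F/∂x, ∂F/∂y, ∂F/∂z is (0,0,0)). If some row of P contains exactly one zero entry, then that row contains an entry equal to 1. -/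
open MvPolynomial

lemma aux_eval_pderiv_monomial (s : Fin 3 →₀ ℕ) (a : ℂ) (l m t₁ t₂ : Fin 3)
    (h1 : t₁ ≠ m) (h2 : t₂ ≠ m) (h12 : t₁ ≠ t₂)
    (hsum : 2 ≤ s t₁ + s t₂) :
    eval (Pi.single m 1 : Fin 3 → ℂ) (pderiv l (monomial s a)) = 0 := by
  classical
  rw [pderiv_monomial]
  set s' := s - Finsupp.single l 1 with hs'
  have happ : ∀ t, s' t = s t - Finsupp.single l 1 t := fun t => Finsupp.tsub_apply s _ t
  have hsingle : Finsupp.single l 1 t₁ = 0 ∨ Finsupp.single l 1 t₂ = 0 := by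
    rcases eq_or_ne t₁ l with h | h
    · right; rw [Finsupp.single_apply, if_neg (fun hh => h12 (h.trans hh))]
    · left; rw [Finsupp.single_apply, if_neg (fun hh => h hh.symm)]
  have hbound : ∀ t, Finsupp.single l 1 t ≤ 1 := fun t => by
    rw [Finsupp.single_apply]; split <;> omega
  have hex : s' t₁ ≠ 0 ∨ s' t₂ ≠ 0 := by
    have b1 := hbound t₁; have b2 := hbound t₂
    have a1 := happ t₁; have a2 := happ t₂
    rcases hsingle with h | h <;> omega
  have main : ∀ t : Fin 3, t ≠ m → s' t ≠ 0 →
      eval (Pi.single m 1 : Fin 3 → ℂ) (monomial s' (a * s l)) = 0 := by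
    intro t htm hts
    rw [eval_monomial]
    have hz : s'.prod (fun n e => (Pi.single m 1 : Fin 3 → ℂ) n ^ e) = 0 := by
      rw [Finsupp.prod]
      apply Finset.prod_eq_zero (Finsupp.mem_support_iff.mpr hts)
      rw [Pi.single_eq_of_ne htm, zero_pow hts]
    rw [hz, mul_zero]
  exact hex.elim (main t₁ h1) (main t₂ h2)

/-- For an irreducible smooth three-term form of degree `d ≥ 3`,
if some row of the power matrix contains exactly one zero entry, then that row
contains an entry equal to 1. -/
theorem three_term_row_with_unique_zero_has_one
    (d : ℕ) (hd : 3 ≤ d)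
    (p : Fin 3 → Fin 3 → ℕ) (A : Fin 3 → ℂ) (hA : ∀ i, A i ≠ 0)
    (hdist : Function.Injective fun i : Fin 3 => (p i 0, p i 1, p i 2))
    (hdeg : ∀ i, p i 0 + p i 1 + p i 2 = d)
    (F : MvPolynomial (Fin 3) ℂ)
    (hF : F = C (A 0) * (X 0 ^ p 0 0 * X 1 ^ p 0 1 * X 2 ^ p 0 2)
            + C (A 1) * (X 0 ^ p 1 0 * X 1 ^ p 1 1 * X 2 ^ p 1 2)
            + C (A 2) * (X 0 ^ p 2 0 * X 1 ^ p 2 1 * X 2 ^ p 2 2))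
    (hirr : Irreducible F)
    (hsmooth : ∀ v : Fin 3 → ℂ, (∀ i, eval v (pderiv i F) = 0) → v = 0)
    (i : Fin 3) (hrow : ∃! j : Fin 3, p i j = 0) :
    ∃ j : Fin 3, p i j = 1 := by
  classical
  by_contra hcon
  push_neg at hcon
  -- rewrite F as a sum of monomials
  have hterm : ∀ (a b c : ℕ) (B : ℂ),
      C B * (X 0 ^ a * X 1 ^ b * X 2 ^ c : MvPolynomial (Fin 3) ℂ)
        = monomial (Finsupp.single 0 a + Finsupp.single 1 b + Finsupp.single 2 c) B := by
    intro a b c B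
    rw [X_pow_eq_monomial, X_pow_eq_monomial, X_pow_eq_monomial, monomial_mul, monomial_mul,
      C_mul_monomial, mul_one, mul_one, mul_one]
  set s : Fin 3 → (Fin 3 →₀ ℕ) := fun k =>
    Finsupp.single 0 (p k 0) + Finsupp.single 1 (p k 1) + Finsupp.single 2 (p k 2) with hsdef
  have hFmono : F = monomial (s 0) (A 0) + monomial (s 1) (A 1) + monomial (s 2) (A 2) := by
    rw [hF, hterm, hterm, hterm]
  have happly : ∀ (k t : Fin 3), s k t = p k t := by
    intro k t
    fin_cases t <;> simp [hsdef, Finsupp.single_apply]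
  -- the key smoothness consequence
  have key : ∀ m : Fin 3, ∃ k, d - 1 ≤ p k m := by
    intro m
    by_contra hc
    push_neg at hc
    obtain ⟨t₁, t₂, h1, h2, h12, hcov⟩ :
        ∃ t₁ t₂ : Fin 3, t₁ ≠ m ∧ t₂ ≠ m ∧ t₁ ≠ t₂ ∧
          ∀ k', p k' t₁ + p k' t₂ + p k' m = d := by
      fin_cases m
      · exact ⟨1, 2, by decide, by decide, by decide, fun k' => by
          have := hdeg k'; show p k' 1 + p k' 2 + p k' 0 = d; omega⟩
      · exact ⟨0, 2, by decide, by decide, by decide, fun k' => by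
          have := hdeg k'; show p k' 0 + p k' 2 + p k' 1 = d; omega⟩
      · exact ⟨0, 1, by decide, by decide, by decide, fun k' => by
          have := hdeg k'; show p k' 0 + p k' 1 + p k' 2 = d; omega⟩
    have hgrad : ∀ l : Fin 3, eval (Pi.single m 1 : Fin 3 → ℂ) (pderiv l F) = 0 := by
      intro l
      rw [hFmono]
      simp only [map_add]
      have hz : ∀ k : Fin 3,
          eval (Pi.single m 1 : Fin 3 → ℂ) (pderiv l (monomial (s k) (A k))) = 0 := by
        intro k
        apply aux_eval_pderiv_monomial (s k) (A k) l m t₁ t₂ h1 h2 h12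
        rw [happly, happly]
        have := hcov k
        have := hc k
        omega
      rw [hz 0, hz 1, hz 2, add_zero, add_zero]
    have := congrFun (hsmooth _ hgrad) m
    simp at this
  obtain ⟨j0, hj0, hju⟩ := hrow
  have hz01 : ¬(p i 0 = 0 ∧ p i 1 = 0) := fun ⟨ha, hb⟩ =>
    absurd ((hju 0 ha).trans (hju 1 hb).symm) (by decide)
  have hz02 : ¬(p i 0 = 0 ∧ p i 2 = 0) := fun ⟨ha, hb⟩ =>
    absurd ((hju 0 ha).trans (hju 2 hb).symm) (by decide)
  have hz12 : ¬(p i 1 = 0 ∧ p i 2 = 0) := fun ⟨ha, hb⟩ =>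
    absurd ((hju 1 ha).trans (hju 2 hb).symm) (by decide)
  have hzero : p i 0 = 0 ∨ p i 1 = 0 ∨ p i 2 = 0 := by
    fin_cases j0
    · exact Or.inl hj0
    · exact Or.inr (Or.inl hj0)
    · exact Or.inr (Or.inr hj0)
  have hideg := hdeg i
  have h1 := hcon 0; have h2 := hcon 1; have h3 := hcon 2
  have hibound : ∀ m : Fin 3, p i m ≤ d - 2 := by
    intro m; fin_cases m
    · show p i 0 ≤ d - 2; omega
    · show p i 1 ≤ d - 2; omega
    · show p i 2 ≤ d - 2; omega
  obtain ⟨k0, hk0⟩ := key 0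
  obtain ⟨k1, hk1⟩ := key 1
  obtain ⟨k2, hk2⟩ := key 2
  have hne0 : k0 ≠ i := fun h => by subst h; have := hibound 0; omega
  have hne1 : k1 ≠ i := fun h => by subst h; have := hibound 1; omega
  have hne2 : k2 ≠ i := fun h => by subst h; have := hibound 2; omega
  have hvne : ∀ a b : Fin 3, a ≠ b → (a : ℕ) ≠ (b : ℕ) := fun a b h hv => h (Fin.ext hv)
  have heq : k0 = k1 ∨ k0 = k2 ∨ k1 = k2 := by
    have := hvne _ _ hne0; have := hvne _ _ hne1; have := hvne _ _ hne2
    have := k0.isLt; have := k1.isLt; have := k2.isLt; have := i.isLt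
    have : (k0 : ℕ) = k1 ∨ (k0 : ℕ) = k2 ∨ (k1 : ℕ) = k2 := by omega
    rcases this with h | h | h
    exacts [Or.inl (Fin.ext h), Or.inr (Or.inl (Fin.ext h)), Or.inr (Or.inr (Fin.ext h))]
  rcases heq with h | h | h
  · subst h; have := hdeg k0; omega
  · subst h; have := hdeg k0; omega
  · subst h; have := hdeg k1; omega
end

section
/- Let F ∈ ℂ[x,y,z] be a three-term form of degree d ≥ 3 with power matrix P = (p_ij), and assume F is irreducible in ℂ[x,y,z] and smooth (the only common zero in ℂ³ of ∂F/∂x, ∂F/∂y, ∂F/∂z is (0,0,0)). Then there exist permutations σ, τ of {1,2,3} such that the set of positions (i,j) with p_{σ(i)τ(j)} ≠ 0 is exactly one of the following five sets: (Fermat type) {(1,1),(2,2),(3,3)}; (small Jordan type) {(1,1),(1,2),(2,2),(3,3)}; (block type) {(1,1),(2,2),(2,3),(3,2),(3,3)}; (big Jordan type) {(1,1),(1,2),(2,2),(2,3),(3,3)}; (Klein type) {(1,1),(1,2),(2,1),(2,3),(3,2),(3,3)}. -/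
open MvPolynomial Finsupp

lemma eval_pderiv_mono (e : Fin 3 → ℕ) (i : Fin 3) (v : Fin 3 → ℂ) :
    eval v (pderiv i ((X 0)^(e 0) * (X 1)^(e 1) * (X 2)^(e 2) : MvPolynomial (Fin 3) ℂ))
    = (e i : ℂ) * (v 0 ^ (e 0 - if i = 0 then 1 else 0) * v 1 ^ (e 1 - if i = 1 then 1 else 0)
        * v 2 ^ (e 2 - if i = 2 then 1 else 0)) := by
  have hs : ((X 0)^(e 0) * (X 1)^(e 1) * (X 2)^(e 2) : MvPolynomial (Fin 3) ℂ)
      = monomial (Finsupp.single 0 (e 0) + Finsupp.single 1 (e 1) + Finsupp.single 2 (e 2)) 1 := by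
    simp [X_pow_eq_monomial, monomial_mul]
  set s : Fin 3 →₀ ℕ := Finsupp.single 0 (e 0) + Finsupp.single 1 (e 1) + Finsupp.single 2 (e 2) with hsdef
  have hsa : ∀ n, s n = e n := by
    intro n
    fin_cases n <;> simp [hsdef, Finsupp.single_apply]
  rw [hs, pderiv_monomial, eval_monomial]
  rw [Finsupp.prod_fintype _ _ (fun n => by simp)]
  simp only [Fin.prod_univ_three, Finsupp.tsub_apply, hsa, Finsupp.single_apply, one_mul]

lemma fin3_cover : ∀ a b c x : Fin 3, a ≠ b → a ≠ c → b ≠ c → (x = a ∨ x = b ∨ x = c) := by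
  decide

lemma prodvanish (a : Fin 3 → ℕ) (j i : Fin 3)
    (hja : a j + 2 ≤ a 0 + a 1 + a 2) (v : Fin 3 → ℂ) (hv : ∀ k, k ≠ j → v k = 0) :
    v 0 ^ (a 0 - if i = 0 then 1 else 0) * v 1 ^ (a 1 - if i = 1 then 1 else 0)
      * v 2 ^ (a 2 - if i = 2 then 1 else 0) = 0 := by
  have hn : (if i = 0 then 1 else 0) + (if i = 1 then 1 else 0) + (if i = 2 then 1 else 0) ≤ 1 := by
    fin_cases i <;> simp
  set n0 := (if i = (0:Fin 3) then 1 else 0)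
  set n1 := (if i = (1:Fin 3) then 1 else 0)
  set n2 := (if i = (2:Fin 3) then 1 else 0)
  rcases fin3_cover 0 1 2 j (by decide) (by decide) (by decide) with rfl | rfl | rfl
  · have hv1 := hv 1 (by decide); have hv2 := hv 2 (by decide)
    rcases (by omega : 1 ≤ a 1 - n1 ∨ 1 ≤ a 2 - n2) with h | h
    · rw [hv1, zero_pow (by omega)]; ring
    · rw [hv2, zero_pow (by omega)]; ring
  · have hv1 := hv 0 (by decide); have hv2 := hv 2 (by decide)
    rcases (by omega : 1 ≤ a 0 - n0 ∨ 1 ≤ a 2 - n2) with h | h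
    · rw [hv1, zero_pow (by omega)]; ring
    · rw [hv2, zero_pow (by omega)]; ring
  · have hv1 := hv 0 (by decide); have hv2 := hv 1 (by decide)
    rcases (by omega : 1 ≤ a 0 - n0 ∨ 1 ≤ a 1 - n1) with h | h
    · rw [hv1, zero_pow (by omega)]; ring
    · rw [hv2, zero_pow (by omega)]; ring

lemma prod_perm (g : Fin 3 → ℂ) (a b c : Fin 3) (hab : a ≠ b) (hac : a ≠ c) (hbc : b ≠ c) :
    g 0 * g 1 * g 2 = g a * g b * g c := by
  rcases fin3_cover 0 1 2 a (by decide) (by decide) (by decide) with rfl | rfl | rfl <;>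
    rcases fin3_cover 0 1 2 b (by decide) (by decide) (by decide) with rfl | rfl | rfl <;>
    rcases fin3_cover 0 1 2 c (by decide) (by decide) (by decide) with rfl | rfl | rfl <;>
    first
      | exact absurd rfl hab
      | exact absurd rfl hac
      | exact absurd rfl hbc
      | ring

def permOf : Fin 6 → Fin 3 → Fin 3 :=
  ![![0,1,2], ![0,2,1], ![1,0,2], ![1,2,0], ![2,0,1], ![2,1,0]]

lemma permOf_bij : ∀ k, Function.Bijective (permOf k) := by decide

noncomputable def permEq (k : Fin 6) : Equiv.Perm (Fin 3) := Equiv.ofBijective _ (permOf_bij k)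

def TTpat1 : Fin 3 → Fin 3 → Bool := ![![true,false,false],![false,true,false],![false,false,true]]
def TTpat2 : Fin 3 → Fin 3 → Bool := ![![true,true,false],![false,true,false],![false,false,true]]
def TTpat3 : Fin 3 → Fin 3 → Bool := ![![true,false,false],![false,true,true],![false,true,true]]
def TTpat4 : Fin 3 → Fin 3 → Bool := ![![true,true,false],![false,true,true],![false,false,true]]
def TTpat5 : Fin 3 → Fin 3 → Bool := ![![true,true,false],![true,false,true],![false,true,true]]

def TTM (x01 x02 x10 x12 x20 x21 : Bool) : Fin 3 → Fin 3 → Bool :=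
  ![![true, x01, x02], ![x10, true, x12], ![x20, x21, true]]

set_option maxRecDepth 10000 in
set_option synthInstance.maxSize 2000 in
set_option synthInstance.maxHeartbeats 1000000 in
set_option maxHeartbeats 2000000 in
lemma keyBool : ∀ x01 x02 x10 x12 x20 x21 : Bool,
    ¬(x01 = true ∧ x02 = true) → ¬(x10 = true ∧ x12 = true) → ¬(x20 = true ∧ x21 = true) →
    ¬(x10 = true ∧ x20 = true) → ¬(x01 = true ∧ x21 = true) → ¬(x02 = true ∧ x12 = true) →
    ∃ ia ib : Fin 6,
      (∀ i j, TTM x01 x02 x10 x12 x20 x21 (permOf ia i) (permOf ib j) = TTpat1 i j) ∨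
      (∀ i j, TTM x01 x02 x10 x12 x20 x21 (permOf ia i) (permOf ib j) = TTpat2 i j) ∨
      (∀ i j, TTM x01 x02 x10 x12 x20 x21 (permOf ia i) (permOf ib j) = TTpat3 i j) ∨
      (∀ i j, TTM x01 x02 x10 x12 x20 x21 (permOf ia i) (permOf ib j) = TTpat4 i j) ∨
      (∀ i j, TTM x01 x02 x10 x12 x20 x21 (permOf ia i) (permOf ib j) = TTpat5 i j) := by
  decide

lemma patmem1 (i j : Fin 3) :
    TTpat1 i j = true ↔ (i,j) ∈ ({(0,0), (1,1), (2,2)} : Set (Fin 3 × Fin 3)) := by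
  fin_cases i <;> fin_cases j <;> simp [TTpat1] <;> decide

lemma patmem2 (i j : Fin 3) :
    TTpat2 i j = true ↔ (i,j) ∈ ({(0,0), (0,1), (1,1), (2,2)} : Set (Fin 3 × Fin 3)) := by
  fin_cases i <;> fin_cases j <;> simp [TTpat2] <;> decide

lemma patmem3 (i j : Fin 3) :
    TTpat3 i j = true ↔ (i,j) ∈ ({(0,0), (1,1), (1,2), (2,1), (2,2)} : Set (Fin 3 × Fin 3)) := by
  fin_cases i <;> fin_cases j <;> simp [TTpat3] <;> decide

lemma patmem4 (i j : Fin 3) :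
    TTpat4 i j = true ↔ (i,j) ∈ ({(0,0), (0,1), (1,1), (1,2), (2,2)} : Set (Fin 3 × Fin 3)) := by
  fin_cases i <;> fin_cases j <;> simp [TTpat4] <;> decide

lemma patmem5 (i j : Fin 3) :
    TTpat5 i j = true ↔ (i,j) ∈ ({(0,0), (0,1), (1,0), (1,2), (2,1), (2,2)} : Set (Fin 3 × Fin 3)) := by
  fin_cases i <;> fin_cases j <;> simp [TTpat5] <;> decide

set_option maxHeartbeats 1000000 in
/-- Classification — after permuting rows and columns, the support of the
power matrix of an irreducible smooth three-term form of degree `d ≥ 3` is one of five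
types: Fermat, small Jordan, block, big Jordan, or Klein. -/
theorem three_term_classification
    (d : ℕ) (hd : 3 ≤ d)
    (p : Fin 3 → Fin 3 → ℕ) (A : Fin 3 → ℂ) (hA : ∀ i, A i ≠ 0)
    (hdist : Function.Injective fun i : Fin 3 => (p i 0, p i 1, p i 2))
    (hdeg : ∀ i, p i 0 + p i 1 + p i 2 = d)
    (F : MvPolynomial (Fin 3) ℂ)
    (hF : F = C (A 0) * (X 0 ^ p 0 0 * X 1 ^ p 0 1 * X 2 ^ p 0 2)
            + C (A 1) * (X 0 ^ p 1 0 * X 1 ^ p 1 1 * X 2 ^ p 1 2)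
            + C (A 2) * (X 0 ^ p 2 0 * X 1 ^ p 2 1 * X 2 ^ p 2 2))
    (hirr : Irreducible F)
    (hsmooth : ∀ v : Fin 3 → ℂ, (∀ i, eval v (pderiv i F) = 0) → v = 0) :
    ∃ σ τ : Equiv.Perm (Fin 3),
      ({q : Fin 3 × Fin 3 | p (σ q.1) (τ q.2) ≠ 0} = {(0,0), (1,1), (2,2)}) ∨
      ({q : Fin 3 × Fin 3 | p (σ q.1) (τ q.2) ≠ 0} = {(0,0), (0,1), (1,1), (2,2)}) ∨
      ({q : Fin 3 × Fin 3 | p (σ q.1) (τ q.2) ≠ 0} = {(0,0), (1,1), (1,2), (2,1), (2,2)}) ∨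
      ({q : Fin 3 × Fin 3 | p (σ q.1) (τ q.2) ≠ 0} = {(0,0), (0,1), (1,1), (1,2), (2,2)}) ∨
      ({q : Fin 3 × Fin 3 | p (σ q.1) (τ q.2) ≠ 0} = {(0,0), (0,1), (1,0), (1,2), (2,1), (2,2)}) := by
  classical
  -- evaluation of partial derivatives
  have hev : ∀ (i : Fin 3) (v : Fin 3 → ℂ), eval v (pderiv i F) =
      ∑ r : Fin 3, A r * ((p r i : ℂ) *
        (v 0 ^ (p r 0 - if i = 0 then 1 else 0) * v 1 ^ (p r 1 - if i = 1 then 1 else 0)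
          * v 2 ^ (p r 2 - if i = 2 then 1 else 0))) := by
    intro i v
    rw [Fin.sum_univ_three, hF]
    simp only [map_add, pderiv_C_mul, eval_add, eval_mul, eval_C]
    rw [eval_pderiv_mono (p 0), eval_pderiv_mono (p 1), eval_pderiv_mono (p 2)]
  -- each column has a dominant row
  have hdom : ∀ j : Fin 3, ∃ rr : Fin 3, d - 1 ≤ p rr j := by
    intro j
    by_contra hc
    push_neg at hc
    set w : Fin 3 → ℂ := fun k => if k = j then 1 else 0 with hw
    have hvz : w = 0 := by
      refine hsmooth w fun i => ?_
      rw [hev i w]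
      refine Finset.sum_eq_zero fun r _ => ?_
      rw [prodvanish (p r) j i (by have h1 := hdeg r; have h2 := hc r; omega) w
        (fun k hk => by rw [hw]; exact if_neg hk), mul_zero, mul_zero]
    have h1 : w j = 0 := by rw [hvz]; rfl
    rw [hw] at h1
    simp at h1
  have hpair : ∀ (r j j' : Fin 3), j ≠ j' → p r j + p r j' ≤ d := by
    intro r j j' h
    rw [← hdeg r]
    rcases fin3_cover 0 1 2 j (by decide) (by decide) (by decide) with rfl | rfl | rfl <;>
      rcases fin3_cover 0 1 2 j' (by decide) (by decide) (by decide) with rfl | rfl | rfl <;>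
      first | exact absurd rfl h | omega
  have hsum3 : ∀ (r a b c : Fin 3), a ≠ b → a ≠ c → b ≠ c → p r a + p r b + p r c = d := by
    intro r a b c hab hac hbc
    rw [← hdeg r]
    rcases fin3_cover 0 1 2 a (by decide) (by decide) (by decide) with rfl | rfl | rfl <;>
      rcases fin3_cover 0 1 2 b (by decide) (by decide) (by decide) with rfl | rfl | rfl <;>
      rcases fin3_cover 0 1 2 c (by decide) (by decide) (by decide) with rfl | rfl | rfl <;>
      first
        | exact absurd rfl hab
        | exact absurd rfl hac
        | exact absurd rfl hbc
        | omega
  choose rr hrr using hdom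
  have rinj : Function.Injective rr := by
    intro j j' h
    by_contra hne
    have h1 := hrr j
    have h2 := hrr j'
    rw [h] at h1
    have h3 := hpair (rr j') j j' hne
    omega
  let σ0 : Equiv.Perm (Fin 3) := Equiv.ofBijective rr (Finite.injective_iff_bijective.mp rinj)
  have hdomg : ∀ j, d - 1 ≤ p (σ0 j) j := fun j => hrr j
  have hoff : ∀ j k l : Fin 3, j ≠ k → j ≠ l → k ≠ l → p (σ0 j) k + p (σ0 j) l ≤ 1 := by
    intro j k l hjk hjl hkl
    have h1 := hdomg j
    have h2 := hsum3 (σ0 j) j k l hjk hjl hkl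
    omega
  -- no two off-diagonal entries in the same column
  have hcol : ∀ a b c : Fin 3, a ≠ b → a ≠ c → b ≠ c →
      p (σ0 a) c ≠ 0 → p (σ0 b) c ≠ 0 → False := by
    intro a b c hab hac hbc ha hb
    have hrowa : p (σ0 a) c = 1 ∧ p (σ0 a) b = 0 := by
      have := hoff a c b hac hab (Ne.symm hbc)
      omega
    have hrowb : p (σ0 b) c = 1 ∧ p (σ0 b) a = 0 := by
      have := hoff b c a hbc (Ne.symm hab) (Ne.symm hac)
      omega
    have haa : p (σ0 a) a = d - 1 := by
      have h1 := hsum3 (σ0 a) a b c hab hac hbc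
      omega
    have hbb : p (σ0 b) b = d - 1 := by
      have h1 := hsum3 (σ0 b) a b c hab hac hbc
      omega
    obtain ⟨z, hz⟩ := IsAlgClosed.exists_pow_nat_eq (-(A (σ0 a)) / (A (σ0 b))) (n := d - 1)
      (by omega)
    set w : Fin 3 → ℂ := fun k => if k = a then 1 else if k = b then z else 0 with hwdef
    have hwa : w a = 1 := by rw [hwdef]; simp
    have hwb : w b = z := by rw [hwdef]; simp [Ne.symm hab]
    have hwc : w c = 0 := by rw [hwdef]; simp [Ne.symm hac, Ne.symm hbc]
    have hvz : w = 0 := by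
      refine hsmooth w fun i => ?_
      rw [hev i w]
      have hst : ∀ r : Fin 3, A r * ((p r i : ℂ) *
          (w 0 ^ (p r 0 - if i = 0 then 1 else 0) * w 1 ^ (p r 1 - if i = 1 then 1 else 0)
            * w 2 ^ (p r 2 - if i = 2 then 1 else 0)))
          = if i = c then ((if r = σ0 a then A (σ0 a) else 0)
              + (if r = σ0 b then A (σ0 b) * z ^ (d-1) else 0)) else 0 := by
        intro r
        obtain ⟨x, rfl⟩ := σ0.surjective r
        have hprod := prod_perm
          (fun k => w k ^ (p (σ0 x) k - if i = k then 1 else 0)) a b c hab hac hbc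
        rw [hprod]
        rcases fin3_cover a b c x hab hac hbc with rfl | rfl | rfl
        · by_cases hic : i = c
          · subst hic
            simp [hwa, hwb, hwc, hrowa.1, hrowa.2, (Equiv.injective σ0).ne hab,
              (Ne.symm hac : ¬ i = x), (Ne.symm hbc : ¬ i = b)]
          · simp [hic, hwa, hwb, hwc, hrowa.1, hrowa.2]
        · by_cases hic : i = c
          · subst hic
            simp [hwa, hwb, hwc, hrowb.1, hrowb.2, hbb,
              (Equiv.injective σ0).ne (Ne.symm hab : x ≠ a),
              (Ne.symm hbc : ¬ i = x)]
          · simp [hic, hwa, hwb, hwc, hrowb.1, hrowb.2]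
        · have hcc := hdomg x
          have hite : (if i = x then 1 else 0) ≤ 1 := by split <;> omega
          have hzp : (0:ℂ) ^ (p (σ0 x) x - (if i = x then 1 else 0)) = 0 :=
            zero_pow (by omega)
          simp [hwc, hzp, (Equiv.injective σ0).ne (Ne.symm hac : ¬ x = a),
            (Equiv.injective σ0).ne (Ne.symm hbc : ¬ x = b)]
      rw [Finset.sum_congr rfl (fun r _ => hst r)]
      by_cases hic : i = c
      · simp only [if_pos hic]
        rw [Finset.sum_add_distrib, Finset.sum_ite_eq' Finset.univ (σ0 a),
          Finset.sum_ite_eq' Finset.univ (σ0 b)]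
        simp only [Finset.mem_univ, if_pos]
        rw [hz]
        field_simp [hA (σ0 b)]
        ring
      · simp [hic]
    have h1 : w a = 0 := by rw [hvz]; rfl
    rw [hwa] at h1
    exact one_ne_zero h1
  -- assemble boolean data
  have hdiag : ∀ i : Fin 3, p (σ0 i) i ≠ 0 := by
    intro i
    have := hdomg i
    omega
  have hrowc : ∀ j k l : Fin 3, j ≠ k → j ≠ l → k ≠ l →
      ¬(p (σ0 j) k ≠ 0 ∧ p (σ0 j) l ≠ 0) := by
    intro j k l hjk hjl hkl h
    have := hoff j k l hjk hjl hkl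
    omega
  obtain ⟨ia, ib, hcase⟩ := keyBool
    (decide (p (σ0 0) 1 ≠ 0)) (decide (p (σ0 0) 2 ≠ 0))
    (decide (p (σ0 1) 0 ≠ 0)) (decide (p (σ0 1) 2 ≠ 0))
    (decide (p (σ0 2) 0 ≠ 0)) (decide (p (σ0 2) 1 ≠ 0))
    (by simp only [decide_eq_true_eq]; exact hrowc 0 1 2 (by decide) (by decide) (by decide))
    (by simp only [decide_eq_true_eq]; exact hrowc 1 0 2 (by decide) (by decide) (by decide))
    (by simp only [decide_eq_true_eq]; exact hrowc 2 0 1 (by decide) (by decide) (by decide))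
    (by simp only [decide_eq_true_eq]; exact fun h => hcol 1 2 0 (by decide) (by decide) (by decide) h.1 h.2)
    (by simp only [decide_eq_true_eq]; exact fun h => hcol 0 2 1 (by decide) (by decide) (by decide) h.1 h.2)
    (by simp only [decide_eq_true_eq]; exact fun h => hcol 0 1 2 (by decide) (by decide) (by decide) h.1 h.2)
  have hM : ∀ i j : Fin 3,
      TTM (decide (p (σ0 0) 1 ≠ 0)) (decide (p (σ0 0) 2 ≠ 0))
        (decide (p (σ0 1) 0 ≠ 0)) (decide (p (σ0 1) 2 ≠ 0))
        (decide (p (σ0 2) 0 ≠ 0)) (decide (p (σ0 2) 1 ≠ 0)) i j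
      = decide (p (σ0 i) j ≠ 0) := by
    intro i j
    rcases fin3_cover 0 1 2 i (by decide) (by decide) (by decide) with rfl | rfl | rfl <;>
      rcases fin3_cover 0 1 2 j (by decide) (by decide) (by decide) with rfl | rfl | rfl <;>
      simp [TTM] <;> exact hdiag _
  refine ⟨(permEq ia).trans σ0, permEq ib, ?_⟩
  have hmem : ∀ pat : Fin 3 → Fin 3 → Bool,
      (∀ i j, TTM (decide (p (σ0 0) 1 ≠ 0)) (decide (p (σ0 0) 2 ≠ 0))
        (decide (p (σ0 1) 0 ≠ 0)) (decide (p (σ0 1) 2 ≠ 0))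
        (decide (p (σ0 2) 0 ≠ 0)) (decide (p (σ0 2) 1 ≠ 0)) (permOf ia i) (permOf ib j)
          = pat i j) →
      ∀ q : Fin 3 × Fin 3,
        (p (((permEq ia).trans σ0) q.1) ((permEq ib) q.2) ≠ 0 ↔ pat q.1 q.2 = true) := by
    intro pat hpat q
    have h1 := hpat q.1 q.2
    rw [hM] at h1
    rw [← h1, decide_eq_true_eq]
    rfl
  rcases hcase with h | h | h | h | h
  · exact Or.inl (Set.ext fun q => (hmem _ h q).trans (patmem1 q.1 q.2))
  · exact Or.inr (Or.inl (Set.ext fun q => (hmem _ h q).trans (patmem2 q.1 q.2)))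
  · exact Or.inr (Or.inr (Or.inl (Set.ext fun q => (hmem _ h q).trans (patmem3 q.1 q.2))))
  · exact Or.inr (Or.inr (Or.inr (Or.inl
      (Set.ext fun q => (hmem _ h q).trans (patmem4 q.1 q.2)))))
  · exact Or.inr (Or.inr (Or.inr (Or.inr
      (Set.ext fun q => (hmem _ h q).trans (patmem5 q.1 q.2)))))
end

section
/- For every d ≥ 3, the small-Jordan-type polynomial F = x^d + y^d + y z^{d-1} ∈ ℂ[x,y,z] is irreducible in ℂ[x,y,z] and smooth: the only common zero (x,y,z) ∈ ℂ³ of ∂F/∂x, ∂F/∂y, ∂F/∂z is (0,0,0). -/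
/-!
Irreducibility is Eisenstein's criterion at the prime `y`: as a polynomial in `x` over `R[y, z]`,
`F = x^d + y (y^(d-1) + z^(d-1))`, whose constant term is divisible by `y` but not by `y^2`.
Smoothness: `∂F/∂z = (d-1) y z^(d-2)` forces `y = 0` or `z = 0`, then `∂F/∂y = d y^(d-1) + z^(d-1)`
kills the other one, and `∂F/∂x = d x^(d-1)` kills `x`.
-/

open MvPolynomial

namespace Polynomial

theorem irreducible_X_pow_add_C_of_prime {A : Type*} [CommRing A] [IsDomain A]
    {p c : A} (hp : Prime p) (hpc : p ∣ c) (hpc2 : ¬ p ^ 2 ∣ c) {n : ℕ} (hn : n ≠ 0) :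
    Irreducible (X ^ n + C c : A[X]) := by
  have hprime : (Ideal.span {p}).IsPrime := (Ideal.span_singleton_prime hp.ne_zero).mpr hp
  have hmonic : (X ^ n + C c).Monic := monic_X_pow_add_C c hn
  have hdeg : (X ^ n + C c).natDegree = n := natDegree_X_pow_add_C
  have hcoeff (k : ℕ) (hk : k ≠ n) : (X ^ n + C c).coeff k = if k = 0 then c else 0 := by
    rw [coeff_add, coeff_X_pow, if_neg hk, zero_add, coeff_C]
  refine IsEisensteinAt.irreducible ?_ hprime hmonic.isPrimitive (by omega)
  refine hmonic.isEisensteinAt_of_mem_of_notMem hprime.ne_top (fun {k} hk => ?_) ?_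
  · rw [hcoeff k (by omega)]
    split_ifs
    · exact Ideal.mem_span_singleton.mpr hpc
    · exact Ideal.zero_mem _
  · rwa [hcoeff 0 (Ne.symm hn), if_pos rfl, Ideal.span_singleton_pow,
      Ideal.mem_span_singleton]

end Polynomial

noncomputable def smallJordan (R : Type*) [CommSemiring R] (d : ℕ) : MvPolynomial (Fin 3) R :=
  X 0 ^ d + X 1 ^ d + X 1 * X 2 ^ (d - 1)

namespace smallJordan

section Irreducible

variable {R : Type*} [CommRing R]

theorem finSuccEquiv_eq (d : ℕ) :
    finSuccEquiv R 2 (smallJordan R d) =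
      Polynomial.X ^ d + Polynomial.C (X 0 ^ d + X 0 * X 1 ^ (d - 1)) := by
  simp only [smallJordan, map_add, map_mul, map_pow, finSuccEquiv_X_zero]
  rw [show (1 : Fin 3) = Fin.succ 0 from rfl, show (2 : Fin 3) = Fin.succ 1 from rfl,
    finSuccEquiv_X_succ, finSuccEquiv_X_succ]
  ring

variable [IsDomain R]

theorem not_X_sq_dvd {d : ℕ} (hd : 2 ≤ d) :
    ¬ (X 0 : MvPolynomial (Fin 2) R) ^ 2 ∣ X 0 ^ d + X 0 * X 1 ^ (d - 1) := by
  intro h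
  have hX0 : Prime (X 0 : MvPolynomial (Fin 2) R) := X_prime
  have hX1 : (X 0 : MvPolynomial (Fin 2) R) ∣ X 1 ^ (d - 1) := by
    rw [← mul_dvd_mul_iff_left hX0.ne_zero, ← pow_two]
    exact (dvd_add_right (pow_dvd_pow _ hd)).mp h
  obtain ⟨q, hq⟩ := hX0.dvd_of_dvd_pow hX1
  simpa using congrArg (eval ![0, 1]) hq

theorem irreducible {d : ℕ} (hd : 2 ≤ d) : Irreducible (smallJordan R d) := by
  rw [← MulEquiv.irreducible_iff (finSuccEquiv R 2), finSuccEquiv_eq]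
  have hdvd : (X 0 : MvPolynomial (Fin 2) R) ∣ X 0 ^ d + X 0 * X 1 ^ (d - 1) :=
    dvd_add (dvd_pow_self _ (by omega)) (dvd_mul_right _ _)
  exact Polynomial.irreducible_X_pow_add_C_of_prime X_prime hdvd (not_X_sq_dvd hd) (by omega)

end Irreducible

section Smooth

variable {R : Type*} [CommRing R]

theorem eval_pderiv_zero (d : ℕ) (v : Fin 3 → R) :
    eval v (pderiv 0 (smallJordan R d)) = d * v 0 ^ (d - 1) := by
  simp [smallJordan, pderiv_X]

theorem eval_pderiv_one (d : ℕ) (v : Fin 3 → R) :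
    eval v (pderiv 1 (smallJordan R d)) = d * v 1 ^ (d - 1) + v 2 ^ (d - 1) := by
  simp [smallJordan, pderiv_X]

theorem eval_pderiv_two (d : ℕ) (v : Fin 3 → R) :
    eval v (pderiv 2 (smallJordan R d)) = (d - 1 : ℕ) * v 1 * v 2 ^ (d - 2) := by
  simp [smallJordan, pderiv_X, Nat.sub_sub]
  ring

theorem eq_zero_of_eval_pderiv_eq_zero [IsDomain R] [CharZero R] {d : ℕ} (hd : 2 ≤ d)
    {v : Fin 3 → R} (hv : ∀ i, eval v (pderiv i (smallJordan R d)) = 0) : v = 0 := by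
  have h0 := eval_pderiv_zero d v ▸ hv 0
  have h1 := eval_pderiv_one d v ▸ hv 1
  have h2 := eval_pderiv_two d v ▸ hv 2
  have hd0 : (d : R) ≠ 0 := Nat.cast_ne_zero.mpr (by omega)
  have hd1 : ((d - 1 : ℕ) : R) ≠ 0 := Nat.cast_ne_zero.mpr (by omega)
  have hx : v 0 = 0 := eq_zero_of_pow_eq_zero ((mul_eq_zero.mp h0).resolve_left hd0)
  have hyz : v 1 = 0 ∧ v 2 = 0 := by
    rcases mul_eq_zero.mp h2 with h | h
    · have hy := (mul_eq_zero.mp h).resolve_left hd1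
      rw [hy, zero_pow (by omega), mul_zero, zero_add] at h1
      exact ⟨hy, eq_zero_of_pow_eq_zero h1⟩
    · have hz := eq_zero_of_pow_eq_zero h
      rw [hz, zero_pow (by omega), add_zero] at h1
      exact ⟨eq_zero_of_pow_eq_zero ((mul_eq_zero.mp h1).resolve_left hd0), hz⟩
  ext i
  fin_cases i
  exacts [hx, hyz.1, hyz.2]

end Smooth

end smallJordan

/-- For every `d ≥ 3` the small-Jordan-type polynomial
`x^d + y^d + y z^(d-1)` is irreducible in `ℂ[x,y,z]` and smooth. -/
theorem small_jordan_type_irreducible_smooth (d : ℕ) (hd : 3 ≤ d) :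
    Irreducible ((X 0 ^ d + X 1 ^ d + X 1 * X 2 ^ (d - 1) : MvPolynomial (Fin 3) ℂ)) ∧
    ∀ v : Fin 3 → ℂ,
      (∀ i, eval v (pderiv i
          (X 0 ^ d + X 1 ^ d + X 1 * X 2 ^ (d - 1) : MvPolynomial (Fin 3) ℂ)) = 0) →
      v = 0 :=
  ⟨smallJordan.irreducible (by omega),
    fun _ => smallJordan.eq_zero_of_eval_pderiv_eq_zero (by omega)⟩
end

section
/- For every d ≥ 3, the big-Jordan-type polynomial F = x^d + x y^{d-1} + y z^{d-1} ∈ ℂ[x,y,z] is irreducible in ℂ[x,y,z] and smooth: the only common zero (x,y,z) ∈ ℂ³ of ∂F/∂x, ∂F/∂y, ∂F/∂z is (0,0,0). -/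
/-!
As a polynomial in `x` over `R[y, z]`, `F = x^d + y^(d-1) x + y z^(d-1)` is monic and Eisenstein
at the prime `y` (the constant term `y z^(d-1)` is not divisible by `y^2`), hence irreducible.
For smoothness, `∂F/∂z = (d-1) y z^(d-2)` forces `y = 0` or `z = 0`; in either case
`∂F/∂x = d x^(d-1) + y^(d-1)` and `∂F/∂y = (d-1) x y^(d-2) + z^(d-1)` kill the other coordinates.
-/

open MvPolynomial

namespace Polynomial

theorem irreducible_X_pow_add_C_mul_X_add_C {R : Type*} [CommRing R] [IsDomain R] {p a b : R}
    (hp : Prime p) {n : ℕ} (hn : 2 ≤ n) (ha : p ∣ a) (hb : p ∣ b) (hb2 : ¬p ^ 2 ∣ b) :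
    Irreducible (X ^ n + C a * X + C b) := by
  rw [add_assoc]
  have hmonic : (X ^ n + (C a * X + C b)).Monic :=
    monic_X_pow_add (degree_linear_le.trans_lt (by exact_mod_cast (by omega : 1 < n)))
  have hdeg : (X ^ n + (C a * X + C b)).natDegree = n := by
    rw [natDegree_add_eq_left_of_degree_lt, natDegree_X_pow]
    exact degree_linear_le.trans_lt (by rw [degree_X_pow]; exact_mod_cast (by omega : 1 < n))
  have hP : (Ideal.span {p}).IsPrime := (Ideal.span_singleton_prime hp.ne_zero).mpr hp
  refine (hmonic.isEisensteinAt_of_mem_of_notMem hP.ne_top (fun {k} hk => ?_) ?_).irreducible hP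
    hmonic.isPrimitive (by omega)
  · rw [hdeg] at hk
    rw [Ideal.mem_span_singleton]
    rcases k with _ | _ | k
    · simpa [coeff_X_pow, coeff_X, if_neg (by omega : 0 ≠ n)] using hb
    · simpa [coeff_X_pow, coeff_X, if_neg (by omega : 1 ≠ n)] using ha
    · simp [coeff_X_pow, if_neg (by omega : k + 1 + 1 ≠ n)]
  · rw [Ideal.span_singleton_pow, Ideal.mem_span_singleton]
    simpa [coeff_X_pow, if_neg (by omega : 0 ≠ n)] using hb2

end Polynomial

noncomputable def bigJordan (R : Type*) [CommSemiring R] (d : ℕ) : MvPolynomial (Fin 3) R :=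
  X 0 ^ d + X 0 * X 1 ^ (d - 1) + X 1 * X 2 ^ (d - 1)

section bigJordan

variable {R : Type*} {d : ℕ}

theorem finSuccEquiv_bigJordan [CommSemiring R] :
    finSuccEquiv R 2 (bigJordan R d) =
      Polynomial.X ^ d + Polynomial.C (X 0 ^ (d - 1)) * Polynomial.X +
        Polynomial.C (X 0 * X 1 ^ (d - 1)) := by
  simp only [bigJordan, map_add, map_mul, map_pow, finSuccEquiv_X_zero]
  rw [show (X 1 : MvPolynomial (Fin 3) R) = X (Fin.succ 0) from rfl,
    show (X 2 : MvPolynomial (Fin 3) R) = X (Fin.succ 1) from rfl, finSuccEquiv_X_succ,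
    finSuccEquiv_X_succ]
  simp only [← Polynomial.C_pow, ← Polynomial.C_mul]
  ring

theorem irreducible_bigJordan [CommRing R] [IsDomain R] (hd : 3 ≤ d) :
    Irreducible (bigJordan R d) := by
  have hX0 : Prime (X 0 : MvPolynomial (Fin 2) R) := X_prime
  have hsq : ¬(X 0 : MvPolynomial (Fin 2) R) ^ 2 ∣ X 0 * X 1 ^ (d - 1) := by
    rw [pow_two, mul_dvd_mul_iff_left hX0.ne_zero]
    exact fun h => by simpa using hX0.dvd_of_dvd_pow h
  rw [← MulEquiv.irreducible_iff (finSuccEquiv R 2).toMulEquiv]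
  exact finSuccEquiv_bigJordan (R := R) ▸ Polynomial.irreducible_X_pow_add_C_mul_X_add_C hX0
    (by omega) (dvd_pow_self _ (by omega)) (dvd_mul_right _ _) hsq

theorem pderiv_zero_bigJordan [CommSemiring R] :
    pderiv 0 (bigJordan R d) = (d : MvPolynomial (Fin 3) R) * X 0 ^ (d - 1) + X 1 ^ (d - 1) := by
  simp only [bigJordan, map_add, pderiv_mul, pderiv_pow, pderiv_X_self, pderiv_X_of_ne, ne_eq,
    Fin.reduceEq, not_false_eq_true]
  ring

theorem pderiv_one_bigJordan [CommSemiring R] :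
    pderiv 1 (bigJordan R d) =
      ((d - 1 : ℕ) : MvPolynomial (Fin 3) R) * X 0 * X 1 ^ (d - 2) + X 2 ^ (d - 1) := by
  simp only [bigJordan, map_add, pderiv_mul, pderiv_pow, pderiv_X_self, pderiv_X_of_ne, ne_eq,
    Fin.reduceEq, not_false_eq_true, Nat.sub_sub]
  ring

theorem pderiv_two_bigJordan [CommSemiring R] :
    pderiv 2 (bigJordan R d) = ((d - 1 : ℕ) : MvPolynomial (Fin 3) R) * X 1 * X 2 ^ (d - 2) := by
  simp only [bigJordan, map_add, pderiv_mul, pderiv_pow, pderiv_X_self, pderiv_X_of_ne, ne_eq,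
    Fin.reduceEq, not_false_eq_true, Nat.sub_sub]
  ring

end bigJordan

theorem eq_zero_of_bigJordan_critical {K : Type*} [CommRing K] [IsDomain K] [CharZero K] {d : ℕ}
    (hd : 3 ≤ d) {x y z : K} (hx : d * x ^ (d - 1) + y ^ (d - 1) = 0)
    (hy : ((d - 1 : ℕ) : K) * x * y ^ (d - 2) + z ^ (d - 1) = 0)
    (hz : ((d - 1 : ℕ) : K) * y * z ^ (d - 2) = 0) : x = 0 ∧ y = 0 ∧ z = 0 := by
  have hd0 : (d : K) ≠ 0 := Nat.cast_ne_zero.mpr (by omega)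
  have hd1 : ((d - 1 : ℕ) : K) ≠ 0 := Nat.cast_ne_zero.mpr (by omega)
  have hd2 : d - 2 ≠ 0 := by omega
  have hd3 : d - 1 ≠ 0 := by omega
  simp only [mul_eq_zero, pow_eq_zero_iff hd2, hd1, false_or] at hz
  rcases hz with rfl | rfl
  · simp_all [zero_pow hd2, zero_pow hd3]
  · simp only [mul_eq_zero, pow_eq_zero_iff hd2, hd1, false_or, zero_pow hd3, add_zero] at hy
    rcases hy with rfl | rfl <;> simp_all [zero_pow hd3]

/-- For every `d ≥ 3` the big-Jordan-type polynomial
`x^d + x y^(d-1) + y z^(d-1)` is irreducible in `ℂ[x,y,z]` and smooth. -/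
theorem big_jordan_type_irreducible_smooth (d : ℕ) (hd : 3 ≤ d) :
    Irreducible
      ((X 0 ^ d + X 0 * X 1 ^ (d - 1) + X 1 * X 2 ^ (d - 1) : MvPolynomial (Fin 3) ℂ)) ∧
    ∀ v : Fin 3 → ℂ,
      (∀ i, eval v (pderiv i
          (X 0 ^ d + X 0 * X 1 ^ (d - 1) + X 1 * X 2 ^ (d - 1) : MvPolynomial (Fin 3) ℂ)) = 0) →
      v = 0 := by
  refine ⟨irreducible_bigJordan hd, fun v hv => ?_⟩
  change ∀ i, eval v (pderiv i (bigJordan ℂ d)) = 0 at hv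
  obtain ⟨h0, h1, h2⟩ := eq_zero_of_bigJordan_critical (x := v 0) (y := v 1) (z := v 2) hd
    (by simpa [pderiv_zero_bigJordan] using hv 0) (by simpa [pderiv_one_bigJordan] using hv 1)
    (by simpa [pderiv_two_bigJordan] using hv 2)
  ext i
  fin_cases i <;> assumption
end

section
/- For every d ≥ 3, the Klein-type polynomial F = x y^{d-1} + y z^{d-1} + z x^{d-1} ∈ ℂ[x,y,z] is irreducible in ℂ[x,y,z] and smooth: the only common zero (x,y,z) ∈ ℂ³ of ∂F/∂x, ∂F/∂y, ∂F/∂z is (0,0,0). -/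
/-!
Irreducibility: as a polynomial in `x` over `ℂ[y, z]`, the form is `z xⁿ + yⁿ x + y zⁿ`
(with `n = d - 1 ≥ 2`), which is Eisenstein at the prime `y`.

Smoothness: at a common zero of the partial derivatives, multiplying the three equations
`yⁿ = -n z xⁿ⁻¹`, `zⁿ = -n x yⁿ⁻¹`, `xⁿ = -n y zⁿ⁻¹` gives `(1 + n³) (xyz)ⁿ = 0`, so one
coordinate vanishes, and then the equations force the other two to vanish as well.
-/

namespace Polynomial
variable {A : Type*} [CommRing A]

theorem coeff_C_mul_X_pow_add_C_pow_mul_X_add_C {p q : A} (n i : ℕ) :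
    (C q * X ^ n + C (p ^ n) * X + C (p * q ^ n)).coeff i =
      (if i = n then q else 0) + (if i = 1 then p ^ n else 0) +
        (if i = 0 then p * q ^ n else 0) := by
  simp only [coeff_add, coeff_C_mul_X_pow, coeff_C_mul_X, coeff_C]

theorem natDegree_C_mul_X_pow_add_C_pow_mul_X_add_C {p q : A} (hq : q ≠ 0) {n : ℕ}
    (hn : 2 ≤ n) :
    (C q * X ^ n + C (p ^ n) * X + C (p * q ^ n)).natDegree = n := by
  compute_degree!
  · rwa [if_neg (by omega), if_neg (by omega), add_zero, add_zero]
  all_goals omega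

theorem irreducible_C_mul_X_pow_add_C_pow_mul_X_add_C [IsDomain A] {p q : A}
    (hp : Prime p) (hq : Prime q) (hpq : ¬ p ∣ q) (hqp : ¬ q ∣ p) {n : ℕ} (hn : 2 ≤ n) :
    Irreducible (C q * X ^ n + C (p ^ n) * X + C (p * q ^ n)) := by
  have hdeg := natDegree_C_mul_X_pow_add_C_pow_mul_X_add_C (p := p) hq.ne_zero hn
  have hcoeff := coeff_C_mul_X_pow_add_C_pow_mul_X_add_C (p := p) (q := q) n
  refine IsEisensteinAt.irreducible (𝓟 := Ideal.span {p}) ⟨?_, ?_, ?_⟩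
    ((Ideal.span_singleton_prime hp.ne_zero).2 hp) ?_ (by omega)
  · rwa [leadingCoeff, hdeg, hcoeff, if_pos rfl, if_neg (by omega), if_neg (by omega), add_zero,
      add_zero, Ideal.mem_span_singleton]
  · intro i hi
    rw [hdeg] at hi
    rw [hcoeff, if_neg hi.ne, zero_add, Ideal.mem_span_singleton]
    refine dvd_add ?_ ?_ <;> split_ifs
    all_goals first | exact dvd_zero p | exact dvd_pow_self p (by omega) | exact dvd_mul_right p _
  · rw [hcoeff, if_neg (by omega), if_neg (by omega), zero_add, zero_add, if_pos rfl,
      Ideal.span_singleton_pow, Ideal.mem_span_singleton, pow_two]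
    exact fun h ↦ hpq (hp.dvd_of_dvd_pow ((mul_dvd_mul_iff_left hp.ne_zero).1 h))
  · intro r hr
    have hr_coeff := (C_dvd_iff_dvd_coeff r _).1 hr
    have hrq : r ∣ q := by
      simpa only [hcoeff, if_true, if_neg (show n ≠ 1 by omega), if_neg (show n ≠ 0 by omega),
        add_zero] using hr_coeff n
    have hrp : r ∣ p ^ n := by
      simpa only [hcoeff, if_neg (show 1 ≠ n by omega), if_true, if_neg one_ne_zero, zero_add,
        add_zero] using hr_coeff 1
    obtain ⟨c, rfl⟩ := hrq
    refine (hq.irreducible.isUnit_or_isUnit rfl).resolve_right fun hc ↦ hqp ?_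
    exact hq.dvd_of_dvd_pow (((associated_mul_unit_right r c hc).symm.dvd).trans hrp)

end Polynomial

section KleinCritical
variable {R : Type*} [CommRing R]

def IsKleinCritical (n : ℕ) (a b c : R) : Prop :=
  b ^ n + n * c * a ^ (n - 1) = 0 ∧ c ^ n + n * a * b ^ (n - 1) = 0 ∧
    a ^ n + n * b * c ^ (n - 1) = 0

namespace IsKleinCritical
variable {n : ℕ} {a b c : R}

theorem rotate (h : IsKleinCritical n a b c) : IsKleinCritical n b c a :=
  ⟨h.2.1, h.2.2, h.1⟩

theorem mul_eq_zero [IsDomain R] [CharZero R] (h : IsKleinCritical n a b c) (hn : 1 ≤ n) :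
    a * b * c = 0 := by
  obtain ⟨m, rfl⟩ := Nat.exists_eq_add_of_le' hn
  obtain ⟨ha, hb, hc⟩ := h
  simp only [Nat.add_sub_cancel] at ha hb hc
  push_cast at ha hb hc
  have key : ((1 + (m + 1) ^ 3 : ℕ) : R) * (a * b * c) ^ (m + 1) = 0 := by
    push_cast
    linear_combination (c ^ (m + 1) * a ^ (m + 1)) * ha
      - ((m + 1 : R) * c * a ^ m * a ^ (m + 1)) * hb
      + ((m + 1 : R) ^ 2 * c * a ^ m * a * b ^ m) * hc
  exact pow_eq_zero_iff (Nat.succ_ne_zero m) |>.1 <|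
    (mul_eq_zero.1 key).resolve_left (Nat.cast_ne_zero.2 (by positivity))

theorem eq_zero_of_left [IsDomain R] (h : IsKleinCritical n a b c) (hn : 2 ≤ n) (ha : a = 0) :
    b = 0 ∧ c = 0 := by
  obtain ⟨h0, h1, -⟩ := h
  subst ha
  rw [zero_pow (by omega), mul_zero, add_zero, pow_eq_zero_iff (by omega)] at h0
  rw [mul_zero, zero_mul, add_zero, pow_eq_zero_iff (by omega)] at h1
  exact ⟨h0, h1⟩

theorem eq_zero [IsDomain R] [CharZero R] (h : IsKleinCritical n a b c) (hn : 2 ≤ n) :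
    a = 0 ∧ b = 0 ∧ c = 0 := by
  rcases _root_.mul_eq_zero.1 (h.mul_eq_zero (by omega)) with hab | hc
  · rcases _root_.mul_eq_zero.1 hab with ha | hb
    · exact ⟨ha, h.eq_zero_of_left hn ha⟩
    · obtain ⟨hc, ha⟩ := h.rotate.eq_zero_of_left hn hb
      exact ⟨ha, hb, hc⟩
  · obtain ⟨ha, hb⟩ := h.rotate.rotate.eq_zero_of_left hn hc
    exact ⟨ha, hb, hc⟩

end IsKleinCritical
end KleinCritical

namespace MvPolynomial

noncomputable def kleinForm (R : Type*) [CommRing R] (n : ℕ) : MvPolynomial (Fin 3) R :=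
  X 0 * X 1 ^ n + X 1 * X 2 ^ n + X 2 * X 0 ^ n

variable {R : Type*} [CommRing R]

theorem finSuccEquiv_kleinForm (n : ℕ) :
    finSuccEquiv R 2 (kleinForm R n) =
      Polynomial.C (X 1) * Polynomial.X ^ n + Polynomial.C (X 0 ^ n) * Polynomial.X +
        Polynomial.C (X 0 * X 1 ^ n) := by
  simp only [kleinForm, map_add, map_mul, map_pow, finSuccEquiv_X_zero]
  rw [show (1 : Fin 3) = Fin.succ 0 from rfl, show (2 : Fin 3) = Fin.succ 1 from rfl,
    finSuccEquiv_X_succ, finSuccEquiv_X_succ]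
  ring

theorem irreducible_kleinForm [IsDomain R] {n : ℕ} (hn : 2 ≤ n) :
    Irreducible (kleinForm R n) := by
  have h := Polynomial.irreducible_C_mul_X_pow_add_C_pow_mul_X_add_C
    (p := (X 0 : MvPolynomial (Fin 2) R)) (q := X 1) X_prime X_prime
    (X_dvd_X.not.2 (by decide)) (X_dvd_X.not.2 (by decide)) hn
  rw [← finSuccEquiv_kleinForm] at h
  exact (MulEquiv.irreducible_iff (finSuccEquiv R 2).toMulEquiv).1 h

theorem isKleinCritical_of_eval_pderiv_eq_zero {n : ℕ} {v : Fin 3 → R}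
    (hv : ∀ i, eval v (pderiv i (kleinForm R n)) = 0) : IsKleinCritical n (v 0) (v 1) (v 2) := by
  have h0 := hv 0
  have h1 := hv 1
  have h2 := hv 2
  simp only [kleinForm, map_add, Derivation.leibniz, Derivation.leibniz_pow, pderiv_X,
    Pi.single_eq_same, Pi.single_eq_of_ne, ne_eq, Fin.reduceEq, not_false_eq_true, smul_eq_mul,
    nsmul_eq_mul, mul_zero, mul_one, zero_add, add_zero, map_mul, map_pow, map_natCast,
    eval_X] at h0 h1 h2
  refine ⟨?_, ?_, ?_⟩
  · linear_combination h0
  · linear_combination h1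
  · linear_combination h2

end MvPolynomial

open MvPolynomial

/-- For every `d ≥ 3` the Klein-type polynomial
`x y^(d-1) + y z^(d-1) + z x^(d-1)` is irreducible in `ℂ[x,y,z]` and smooth. -/
theorem klein_type_irreducible_smooth (d : ℕ) (hd : 3 ≤ d) :
    Irreducible
      ((X 0 * X 1 ^ (d - 1) + X 1 * X 2 ^ (d - 1) + X 2 * X 0 ^ (d - 1) :
        MvPolynomial (Fin 3) ℂ)) ∧
    ∀ v : Fin 3 → ℂ,
      (∀ i, eval v (pderiv i
          (X 0 * X 1 ^ (d - 1) + X 1 * X 2 ^ (d - 1) + X 2 * X 0 ^ (d - 1) :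
            MvPolynomial (Fin 3) ℂ)) = 0) →
      v = 0 := by
  refine ⟨irreducible_kleinForm (R := ℂ) (n := d - 1) (by omega), fun v hv ↦ ?_⟩
  obtain ⟨h0, h1, h2⟩ := (isKleinCritical_of_eval_pderiv_eq_zero hv).eq_zero (by omega)
  funext i
  fin_cases i <;> assumption
end

section
/- The Fermat quartic x⁴ + y⁴ + z⁴ ∈ ℂ[x,y,z] is projectively equivalent over ℂ to the block-type quartic x⁴ + y³z + yz³: there exist an invertible 3×3 complex matrix M and a nonzero constant c ∈ ℂ such that substituting M·(x,y,z)ᵀ for (x,y,z) in x⁴ + y⁴ + z⁴ yields c·(x⁴ + y³z + yz³) as a polynomial identity. -/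
/-!
Since `(y + z)⁴ - (y - z)⁴ = 8 (y³z + yz³)`, choosing `w⁴ = 8` and `ζ⁴ = -1` gives
`(w x)⁴ + (y + z)⁴ + (ζ (y - z))⁴ = 8 (x⁴ + y³z + yz³)`, and the three linear forms on the
left are independent as soon as `2 w ζ ≠ 0`.
-/

open MvPolynomial

section

variable {R : Type*} [CommRing R]

theorem fourth_powers_eq_eight_mul_block_quartic {w ζ : R} (hw : w ^ 4 = 8) (hζ : ζ ^ 4 = -1)
    (x y z : R) :
    (w * x) ^ 4 + (y + z) ^ 4 + (ζ * (y - z)) ^ 4 = 8 * (x ^ 4 + y ^ 3 * z + y * z ^ 3) := by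
  linear_combination x ^ 4 * hw + (y - z) ^ 4 * hζ

def fermatToBlockMatrix (w ζ : R) : Matrix (Fin 3) (Fin 3) R :=
  !![w, 0, 0; 0, 1, 1; 0, ζ, -ζ]

theorem det_fermatToBlockMatrix (w ζ : R) :
    (fermatToBlockMatrix w ζ).det = -(2 * w * ζ) := by
  simp only [fermatToBlockMatrix, Matrix.det_fin_three, Matrix.of_apply, Matrix.cons_val',
    Matrix.cons_val_fin_one, Matrix.cons_val_zero, Matrix.cons_val_one, Matrix.cons_val]
  ring

theorem aeval_fermatToBlockMatrix_fermat_quartic (w ζ : R) :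
    aeval (fun i => ∑ j, C (fermatToBlockMatrix w ζ i j) * X j)
        (X 0 ^ 4 + X 1 ^ 4 + X 2 ^ 4 : MvPolynomial (Fin 3) R)
      = (C w * X 0) ^ 4 + (X 1 + X 2) ^ 4 + (C ζ * (X 1 - X 2)) ^ 4 := by
  simp only [fermatToBlockMatrix, Matrix.of_apply, Matrix.cons_val', Matrix.cons_val_fin_one,
    Matrix.cons_val_zero, Matrix.cons_val_one, Matrix.cons_val, Fin.sum_univ_three, map_add,
    map_pow, aeval_X, C_0, C_1, C_neg]
  ring

end

/-- The Fermat quartic `x⁴ + y⁴ + z⁴` is projectively equivalent over ℂ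
to the block-type quartic `x⁴ + y³z + yz³`. -/
theorem fermat_quartic_equiv_block_quartic :
    ∃ (M : Matrix (Fin 3) (Fin 3) ℂ) (c : ℂ), M.det ≠ 0 ∧ c ≠ 0 ∧
      aeval (fun i => ∑ j, C (M i j) * X j)
          (X 0 ^ 4 + X 1 ^ 4 + X 2 ^ 4 : MvPolynomial (Fin 3) ℂ)
        = C c * (X 0 ^ 4 + X 1 ^ 3 * X 2 + X 1 * X 2 ^ 3 : MvPolynomial (Fin 3) ℂ) := by
  obtain ⟨w, hw⟩ := IsAlgClosed.exists_pow_nat_eq (8 : ℂ) (by norm_num : 0 < 4)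
  obtain ⟨ζ, hζ⟩ := IsAlgClosed.exists_pow_nat_eq (-1 : ℂ) (by norm_num : 0 < 4)
  have hw0 : w ≠ 0 := by rintro rfl; norm_num at hw
  have hζ0 : ζ ≠ 0 := by rintro rfl; norm_num at hζ
  refine ⟨fermatToBlockMatrix w ζ, 8, ?_, by norm_num, ?_⟩
  · rw [det_fermatToBlockMatrix]
    simp [hw0, hζ0]
  · rw [aeval_fermatToBlockMatrix_fermat_quartic, map_ofNat]
    exact fourth_powers_eq_eight_mul_block_quartic (by rw [← map_pow, hw, map_ofNat])
      (by rw [← map_pow, hζ, map_neg, map_one]) _ _ _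
end

section
/- Each of the three smooth cubics x³ + y³ + yz², x³ + y²z + yz², and xy² + yz² + zx² in ℂ[x,y,z] is projectively equivalent over ℂ to the Fermat cubic x³ + y³ + z³: for each of them there exist an invertible 3×3 complex matrix M and a nonzero constant c ∈ ℂ such that substituting M·(x,y,z)ᵀ for (x,y,z) in x³ + y³ + z³ yields c times that cubic. (Hence, among the five three-term cubic types, there are only two birational equivalence classes.) -/
open MvPolynomial

/-- Each of the three-term cubics `x³ + y³ + yz²` (small Jordan),
`x³ + y²z + yz²` (block) and `xy² + yz² + zx²` (Klein) is projectively equivalent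
over ℂ to the Fermat cubic `x³ + y³ + z³`. -/
theorem three_term_cubics_equiv_fermat_cubic :
    (∃ (M : Matrix (Fin 3) (Fin 3) ℂ) (c : ℂ), M.det ≠ 0 ∧ c ≠ 0 ∧
      aeval (fun i => ∑ j, C (M i j) * X j)
          (X 0 ^ 3 + X 1 ^ 3 + X 2 ^ 3 : MvPolynomial (Fin 3) ℂ)
        = C c * (X 0 ^ 3 + X 1 ^ 3 + X 1 * X 2 ^ 2 : MvPolynomial (Fin 3) ℂ)) ∧
    (∃ (M : Matrix (Fin 3) (Fin 3) ℂ) (c : ℂ), M.det ≠ 0 ∧ c ≠ 0 ∧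
      aeval (fun i => ∑ j, C (M i j) * X j)
          (X 0 ^ 3 + X 1 ^ 3 + X 2 ^ 3 : MvPolynomial (Fin 3) ℂ)
        = C c * (X 0 ^ 3 + X 1 ^ 2 * X 2 + X 1 * X 2 ^ 2 : MvPolynomial (Fin 3) ℂ)) ∧
    (∃ (M : Matrix (Fin 3) (Fin 3) ℂ) (c : ℂ), M.det ≠ 0 ∧ c ≠ 0 ∧
      aeval (fun i => ∑ j, C (M i j) * X j)
          (X 0 ^ 3 + X 1 ^ 3 + X 2 ^ 3 : MvPolynomial (Fin 3) ℂ)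
        = C c * (X 0 * X 1 ^ 2 + X 1 * X 2 ^ 2 + X 2 * X 0 ^ 2 : MvPolynomial (Fin 3) ℂ)) := by
  -- a primitive ninth root of unity (root of `z^6 + z^3 + 1`)
  obtain ⟨z, hz⟩ : ∃ z : ℂ, z ^ 6 + z ^ 3 + 1 = 0 := by
    obtain ⟨z, hz⟩ := IsAlgClosed.exists_root
      (Polynomial.X ^ 6 + Polynomial.X ^ 3 + 1 : Polynomial ℂ) (by
        have h6 : (Polynomial.X ^ 6 + Polynomial.X ^ 3 + 1 : Polynomial ℂ).degree = 6 := by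
          compute_degree!
        rw [h6]; norm_num)
    exact ⟨z, by simpa [Polynomial.IsRoot] using hz⟩
  have hz9 : z ^ 9 = 1 := by linear_combination (z ^ 3 - 1) * hz
  -- the real constants √3 and ∛2
  set s : ℂ := ((Real.sqrt 3 : ℝ) : ℂ) with hs_def
  set u : ℂ := (((2 : ℝ) ^ ((1 : ℝ)/3) : ℝ) : ℂ) with hu_def
  have hs : s ^ 2 = 3 := by
    rw [hs_def, ← Complex.ofReal_pow, Real.sq_sqrt (by norm_num : (0:ℝ) ≤ 3)]
    norm_num
  have hu : u ^ 3 = 2 := by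
    rw [hu_def, ← Complex.ofReal_pow, ← Real.rpow_natCast ((2:ℝ) ^ ((1:ℝ)/3)) 3,
      ← Real.rpow_mul (by norm_num : (0:ℝ) ≤ 2)]
    norm_num
  have hs0 : s ≠ 0 := by
    rw [hs_def]
    exact_mod_cast Complex.ofReal_ne_zero.2 (by positivity : Real.sqrt 3 ≠ 0)
  have hu0 : u ≠ 0 := by
    rw [hu_def]
    exact_mod_cast Complex.ofReal_ne_zero.2 (by positivity : (2:ℝ) ^ ((1:ℝ)/3) ≠ 0)
  refine ⟨⟨!![u*s, 0, 0; 0, s, 1; 0, s, -1], 6*s, ?_, ?_, ?_⟩,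
          ⟨!![2 + z^3, 0, 0; 0, -z^6, 1; 0, z^6, -z^3], 3 + 6*z^3, ?_, ?_, ?_⟩,
          ⟨!![1, 1, 1; z, z^4, z^7; z^2, z^8, z^5], 9, ?_, ?_, ?_⟩⟩
  · -- det case 1
    simp only [Matrix.det_fin_three, Matrix.cons_val_zero, Matrix.cons_val_one,
      Matrix.head_cons, Matrix.cons_val_two, Matrix.tail_cons, Matrix.head_fin_const,
      Matrix.cons_val', Matrix.empty_val', Matrix.cons_val_fin_one, Matrix.of_apply]
    intro h
    have h3 : u * s ^ 2 = 0 := by linear_combination (-1/2 : ℂ) * h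
    rw [hs] at h3
    simp only [mul_eq_zero] at h3
    rcases h3 with h3 | h3
    · exact hu0 h3
    · norm_num at h3
  · exact mul_ne_zero (by norm_num) hs0
  · -- identity case 1
    apply MvPolynomial.funext
    intro v
    simp only [map_add, map_pow, map_mul, aeval_X, map_sum, eval_C, eval_X,
      Fin.sum_univ_three, Matrix.cons_val_zero, Matrix.cons_val_one, Matrix.head_cons,
      Matrix.cons_val_two, Matrix.tail_cons, Matrix.head_fin_const, Matrix.cons_val',
      Matrix.empty_val', Matrix.cons_val_fin_one, Matrix.of_apply]
    linear_combination (s^3 * v 0 ^ 3) * hu + (2*s*(v 0)^3 + 2*s*(v 1)^3) * hs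
  · -- det case 2 : (2+z^3)(z^9 - z^6) ≠ 0
    simp only [Matrix.det_fin_three, Matrix.cons_val_zero, Matrix.cons_val_one,
      Matrix.head_cons, Matrix.cons_val_two, Matrix.tail_cons, Matrix.head_fin_const,
      Matrix.cons_val', Matrix.empty_val', Matrix.cons_val_fin_one, Matrix.of_apply]
    intro h
    have hD : (2 + z^3) * (z^9 - z^6) = 0 := by linear_combination h
    have : (1 : ℂ) = 0 := by
      linear_combination (-1/3 * z^3) * hD + (1 - z^3 + (1/3)*z^9) * hz
    norm_num at this
  · -- c case 2
    intro h
    have : (1 : ℂ) = 0 := by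
      linear_combination (-1/9 - 2/9*z^3) * h + (4/3 : ℂ) * hz
    norm_num at this
  · -- identity case 2
    apply MvPolynomial.funext
    intro v
    simp only [map_add, map_pow, map_mul, aeval_X, map_sum, eval_C, eval_X,
      Fin.sum_univ_three, Matrix.cons_val_zero, Matrix.cons_val_one, Matrix.head_cons,
      Matrix.cons_val_two, Matrix.tail_cons, Matrix.head_fin_const, Matrix.cons_val',
      Matrix.empty_val', Matrix.cons_val_fin_one, Matrix.of_apply]
    linear_combination ((v 2)^3 - 3*(v 1)*(v 2)^2 - 3*(v 1)^2*(v 2) + 5*(v 0)^3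
      - z^3*(v 2)^3 - 3*z^3*(v 1)*(v 2)^2 - 3*z^3*(v 1)^2*(v 2) + z^3*(v 0)^3
      + 3*z^6*(v 1)*(v 2)^2 + 6*z^6*(v 1)^2*(v 2) - 3*z^9*(v 1)^2*(v 2)) * hz
  · -- det case 3 : 3z^9 - z^15 - 2z^6 ≠ 0
    simp only [Matrix.det_fin_three, Matrix.cons_val_zero, Matrix.cons_val_one,
      Matrix.head_cons, Matrix.cons_val_two, Matrix.tail_cons, Matrix.head_fin_const,
      Matrix.cons_val', Matrix.empty_val', Matrix.cons_val_fin_one, Matrix.of_apply]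
    intro h
    have hD : 3*z^9 - z^15 - 2*z^6 = 0 := by linear_combination h
    have : (1 : ℂ) = 0 := by
      linear_combination (1/9 - 1/9*z^3) * hD
        + (1 - z^3 + (2/9)*z^6 + (2/9)*z^9 - (1/9)*z^12) * hz
    norm_num at this
  · -- c case 3
    norm_num
  · -- identity case 3
    apply MvPolynomial.funext
    intro v
    simp only [map_add, map_pow, map_mul, aeval_X, map_sum, eval_C, eval_X,
      Fin.sum_univ_three, Matrix.cons_val_zero, Matrix.cons_val_one, Matrix.head_cons,
      Matrix.cons_val_two, Matrix.tail_cons, Matrix.head_fin_const, Matrix.cons_val',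
      Matrix.empty_val', Matrix.cons_val_fin_one, Matrix.of_apply]
    linear_combination ((v 2)^3 - 6*(v 1)*(v 2)^2 + 3*(v 1)^2*(v 2) + (v 1)^3
      + 3*(v 0)*(v 2)^2 + 6*(v 0)*(v 1)*(v 2) - 6*(v 0)*(v 1)^2 - 6*(v 0)^2*(v 2)
      + 3*(v 0)^2*(v 1) + (v 0)^3
      - z^3*(v 2)^3 + 6*z^3*(v 1)*(v 2)^2 - 3*z^3*(v 1)^2*(v 2) - z^3*(v 1)^3
      - 3*z^3*(v 0)*(v 2)^2 - 6*z^3*(v 0)*(v 1)*(v 2) + 6*z^3*(v 0)*(v 1)^2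
      + 6*z^3*(v 0)^2*(v 2) - 3*z^3*(v 0)^2*(v 1)
      + 3*z^6*(v 0)^2*(v 1)
      + z^9*(v 2)^3 - 6*z^9*(v 1)*(v 2)^2 + 3*z^9*(v 1)^2*(v 2) + z^9*(v 1)^3
      + 3*z^9*(v 0)*(v 2)^2 + 6*z^9*(v 0)*(v 1)*(v 2) - 3*z^9*(v 0)*(v 1)^2
      - z^12*(v 2)^3 + 6*z^12*(v 1)*(v 2)^2 - 3*z^12*(v 1)^2*(v 2) + 3*z^12*(v 0)*(v 1)^2
      + z^15*(v 2)^3 + 3*z^15*(v 1)^2*(v 2) - z^15*(v 1)^3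
      + z^18*(v 1)^3) * hz
end

section
/- Let P = (p_ij) be a 3×3 matrix of natural numbers all of whose row sums equal d ≥ 1, and whose determinant Δ (computed as an integer) is nonzero. Consider the subgroup H of (ℂˣ)³ consisting of all triples (λ₁, λ₂, λ₃) of nonzero complex numbers such that λ₁^{p₁₁}λ₂^{p₁₂}λ₃^{p₁₃} = λ₁^{p₂₁}λ₂^{p₂₂}λ₃^{p₂₃} = λ₁^{p₃₁}λ₂^{p₃₂}λ₃^{p₃₃}, and its subgroup S = {(λ, λ, λ) : λ ∈ ℂˣ} of scalar triples. Then the quotient group H/S is finite of order |Δ|/d. (In particular, when |Δ| > d the corresponding three-term curve has a non-trivial group of diagonal projective automorphisms.) -/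
/-!
Dehomogenizing by `λ ↦ (λ₁/λ₀, λ₂/λ₀)` kills exactly the scalar triples and, because every row
of `P` sums to `d`, turns the two equations defining `H` into `μ^M = 1` for the integer
`2 × 2` matrix `M` of consecutive row differences of `P` (first column deleted). Hence
`H/S ≅ {μ ∈ (ℂˣ)² | μ^M = 1}`, while `det P = d · det M`. This kernel is unchanged under
`M ↦ U M` with `U ∈ SL₂(ℤ)`, and a Bézout row operation makes `M` triangular, `M = [[a, g], [c, 0]]`.
Then projecting to the first coordinate exhibits the kernel as an extension of the `c`-th roots
of unity by the `g`-th roots of unity, so it has `|g c| = |det M|` elements.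
-/

lemma zpow_finset_sum {G ι : Type*} [CommGroup G] (a : G) (s : Finset ι) (f : ι → ℤ) :
    a ^ (∑ i ∈ s, f i) = ∏ i ∈ s, a ^ f i := by
  classical
  induction s using Finset.induction_on with
  | empty => simp
  | insert i s hi ih => rw [Finset.sum_insert hi, Finset.prod_insert hi, zpow_add, ih]

lemma Subgroup.card_eq_card_ker_inf_mul_card_map {A B : Type*} [Group A] [Group B]
    (K : Subgroup A) (f : A →* B) :
    Nat.card K = Nat.card (f.ker ⊓ K : Subgroup A) * Nat.card (K.map f) := by
  rw [← (f.domRestrict K).ker.card_mul_index, Subgroup.index_ker, MonoidHom.domRestrict_range,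
    MonoidHom.ker_domRestrict, ← Subgroup.subgroupOf_map_subtype,
    Subgroup.card_map_of_injective K.subtype_injective]

lemma MonoidHom.card_comap_quotient_ker {A B : Type*} [Group A] [Group B] {f : A →* B}
    (hf : Function.Surjective f) (K : Subgroup B) :
    Nat.card (K.comap f ⧸ f.ker.subgroupOf (K.comap f)) = Nat.card K := by
  rw [← MonoidHom.ker_domRestrict, Nat.card_congr (QuotientGroup.quotientKerEquivRange _).toEquiv,
    MonoidHom.domRestrict_range, Subgroup.map_comap_eq_self_of_surjective hf]

section Monomial

variable {G : Type*} [CommGroup G] {ι κ μ : Type*} [Fintype κ]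

def monomialHom (M : Matrix ι κ ℤ) : (κ → G) →* (ι → G) where
  toFun x i := ∏ j, x j ^ M i j
  map_one' := by ext; simp
  map_mul' x y := by ext; simp [mul_zpow, Finset.prod_mul_distrib]

@[simp]
lemma monomialHom_apply (M : Matrix ι κ ℤ) (x : κ → G) (i : ι) :
    monomialHom M x i = ∏ j, x j ^ M i j := rfl

lemma mem_ker_monomialHom {M : Matrix ι κ ℤ} {x : κ → G} :
    x ∈ (monomialHom M).ker ↔ ∀ i, ∏ j, x j ^ M i j = 1 := by
  simp [funext_iff]

lemma monomialHom_mul [Fintype ι] (U : Matrix μ ι ℤ) (M : Matrix ι κ ℤ) :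
    monomialHom (G := G) (U * M) = (monomialHom U).comp (monomialHom M) := by
  ext x i
  simp only [monomialHom_apply, MonoidHom.comp_apply, Matrix.mul_apply, zpow_finset_sum,
    ← Finset.prod_zpow]
  rw [Finset.prod_comm]
  simp only [mul_comm (U i _), zpow_mul]

lemma ker_monomialHom_le_ker_mul [Fintype ι] (U : Matrix μ ι ℤ) (M : Matrix ι κ ℤ) :
    (monomialHom (G := G) M).ker ≤ (monomialHom (U * M)).ker := by
  rw [monomialHom_mul, ← MonoidHom.comap_ker]
  exact MonoidHom.ker_le_comap _ _

lemma ker_monomialHom_mul_of_isUnit [Fintype ι] [DecidableEq ι] {U : Matrix ι ι ℤ}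
    (hU : IsUnit U.det) (M : Matrix ι κ ℤ) :
    (monomialHom (G := G) (U * M)).ker = (monomialHom M).ker := by
  refine le_antisymm ?_ (ker_monomialHom_le_ker_mul U M)
  simpa [← Matrix.mul_assoc, Matrix.nonsing_inv_mul _ hU] using
    ker_monomialHom_le_ker_mul (G := G) U⁻¹ (U * M)

end Monomial

lemma Matrix.exists_det_eq_one_mul_apply_one_one_eq_zero (M : Matrix (Fin 2) (Fin 2) ℤ) :
    ∃ U : Matrix (Fin 2) (Fin 2) ℤ, U.det = 1 ∧ (U * M) 1 1 = 0 := by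
  by_cases hg : Int.gcd (M 0 1) (M 1 1) = 0
  · obtain ⟨-, h11⟩ := Int.gcd_eq_zero_iff.mp hg
    exact ⟨1, Matrix.det_one, by simp [h11]⟩
  obtain ⟨g, b, e, -, hbe, hb, he⟩ := Int.exists_gcd_one' (Nat.pos_of_ne_zero hg)
  obtain ⟨s, t, hst⟩ := Int.isCoprime_iff_gcd_eq_one.mpr hbe
  refine ⟨!![s, t; -e, b], ?_, ?_⟩
  · rw [Matrix.det_fin_two_of]
    linear_combination hst
  · simp [Matrix.mul_apply, Fin.sum_univ_two, hb, he]
    ring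

lemma IsAlgClosed.exists_units_zpow_eq {K : Type*} [Field K] [IsAlgClosed K] {n : ℤ}
    (hn : n ≠ 0) (z : Kˣ) : ∃ w : Kˣ, w ^ n = z := by
  have hroot (u : Kˣ) : ∃ w : Kˣ, w ^ n.natAbs = u := by
    obtain ⟨x, hx⟩ := IsAlgClosed.exists_pow_nat_eq (u : K) (Int.natAbs_pos.mpr hn)
    have hx0 : x ≠ 0 := by
      rintro rfl
      exact u.ne_zero (by rw [← hx, zero_pow (Int.natAbs_ne_zero.mpr hn)])
    exact ⟨Units.mk0 x hx0, Units.ext (by simpa using hx)⟩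
  rcases Int.natAbs_eq n with h | h
  · obtain ⟨w, hw⟩ := hroot z
    exact ⟨w, by rw [h, zpow_natCast, hw]⟩
  · obtain ⟨w, hw⟩ := hroot z⁻¹
    exact ⟨w, by rw [h, zpow_neg, zpow_natCast, hw, inv_inv]⟩

namespace Complex

lemma card_ker_zpowGroupHom {n : ℤ} (hn : n ≠ 0) :
    Nat.card (zpowGroupHom n : ℂˣ →* ℂˣ).ker = n.natAbs := by
  have : NeZero n.natAbs := ⟨Int.natAbs_ne_zero.mpr hn⟩
  have hker : (zpowGroupHom n : ℂˣ →* ℂˣ).ker = rootsOfUnity n.natAbs ℂ := by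
    ext w
    simp [pow_natAbs_eq_one]
  rw [hker, Complex.card_rootsOfUnity]

lemma card_ker_monomialHom_of_apply_one_one_eq_zero {T : Matrix (Fin 2) (Fin 2) ℤ}
    (h11 : T 1 1 = 0) (hT : T.det ≠ 0) :
    Nat.card (monomialHom (G := ℂˣ) T).ker = T.det.natAbs := by
  have hdet : T.det = -(T 0 1 * T 1 0) := by
    rw [Matrix.det_fin_two, h11]
    ring
  obtain ⟨h01, h10⟩ : T 0 1 ≠ 0 ∧ T 1 0 ≠ 0 := by
    rw [hdet, neg_ne_zero] at hT
    exact mul_ne_zero_iff.mp hT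
  set K := (monomialHom (G := ℂˣ) T).ker
  have hK (x : Fin 2 → ℂˣ) : x ∈ K ↔ x 0 ^ T 0 0 * x 1 ^ T 0 1 = 1 ∧ x 0 ^ T 1 0 = 1 := by
    rw [mem_ker_monomialHom]
    simp [Fin.forall_fin_two, h11]
  let π : (Fin 2 → ℂˣ) →* ℂˣ := Pi.evalMonoidHom _ 0
  have hfiber : π.ker ⊓ K = (zpowGroupHom (T 0 1)).ker.map (MonoidHom.mulSingle _ 1) := by
    ext x
    simp only [Subgroup.mem_inf, hK, MonoidHom.mem_ker, Subgroup.mem_map, π,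
      Pi.evalMonoidHom_apply, zpowGroupHom_apply]
    constructor
    · rintro ⟨hx0, hx, -⟩
      refine ⟨x 1, by simpa [hx0] using hx, funext (Fin.forall_fin_two.mpr ⟨?_, ?_⟩)⟩ <;>
        simp [hx0]
    · rintro ⟨y, hy, rfl⟩
      simp [hy]
  have hbase : K.map π = (zpowGroupHom (T 1 0)).ker := by
    ext z
    simp only [Subgroup.mem_map, hK, MonoidHom.mem_ker, π, Pi.evalMonoidHom_apply,
      zpowGroupHom_apply]
    constructor
    · rintro ⟨x, ⟨-, hx⟩, rfl⟩
      exact hx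
    · intro hz
      obtain ⟨y, hy⟩ := IsAlgClosed.exists_units_zpow_eq h01 (z ^ T 0 0)⁻¹
      exact ⟨![z, y], ⟨by simp [hy], by simpa using hz⟩, rfl⟩
  rw [K.card_eq_card_ker_inf_mul_card_map π, hfiber, hbase,
    Subgroup.card_map_of_injective (Pi.mulSingle_injective (M := fun _ : Fin 2 => ℂˣ) 1),
    card_ker_zpowGroupHom h01, card_ker_zpowGroupHom h10, hdet, Int.natAbs_neg, Int.natAbs_mul]

theorem card_ker_monomialHom_fin_two {M : Matrix (Fin 2) (Fin 2) ℤ} (hM : M.det ≠ 0) :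
    Nat.card (monomialHom (G := ℂˣ) M).ker = M.det.natAbs := by
  obtain ⟨U, hU, hU11⟩ := M.exists_det_eq_one_mul_apply_one_one_eq_zero
  have hdet : (U * M).det = M.det := by rw [Matrix.det_mul, hU, one_mul]
  rw [← ker_monomialHom_mul_of_isUnit (hU ▸ isUnit_one) M,
    card_ker_monomialHom_of_apply_one_one_eq_zero hU11 (hdet ▸ hM), hdet]

end Complex

section Dehomogenize

variable {G : Type*} [CommGroup G] {n : ℕ}

def dehomogenize (n : ℕ) : (Fin (n + 1) → G) →* (Fin n → G) where
  toFun x i := x i.succ / x 0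
  map_one' := by ext; simp
  map_mul' x y := by ext; simp [mul_div_mul_comm]

@[simp]
lemma dehomogenize_apply (x : Fin (n + 1) → G) (i : Fin n) :
    dehomogenize n x i = x i.succ / x 0 := rfl

lemma dehomogenize_surjective : Function.Surjective (dehomogenize (G := G) n) :=
  fun y => ⟨Fin.cons 1 y, by ext; simp⟩

lemma mem_ker_dehomogenize {x : Fin (n + 1) → G} :
    x ∈ (dehomogenize n).ker ↔ ∃ g, x = fun _ => g := by
  constructor
  · intro hx
    refine ⟨x 0, funext fun i => Fin.cases rfl (fun i => ?_) i⟩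
    exact div_eq_one.mp (congrFun hx i)
  · rintro ⟨g, rfl⟩
    ext
    simp

lemma prod_pow_eq_pow_sum_mul_prod_dehomogenize (x : Fin (n + 1) → G) (p : Fin (n + 1) → ℕ) :
    ∏ j, x j ^ p j = x 0 ^ (∑ j, p j) * ∏ j : Fin n, dehomogenize n x j ^ p j.succ := by
  simp only [dehomogenize_apply, div_pow, Finset.prod_div_distrib, Fin.prod_univ_succ (n := n),
    Fin.sum_univ_succ (n := n), pow_add, Finset.prod_pow_eq_pow_sum]
  rw [mul_assoc, mul_div_cancel]

lemma prod_pow_eq_prod_pow_iff (x : Fin (n + 1) → G) {p q : Fin (n + 1) → ℕ}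
    (h : ∑ j, p j = ∑ j, q j) :
    ∏ j, x j ^ p j = ∏ j, x j ^ q j ↔
      ∏ j : Fin n, dehomogenize n x j ^ ((p j.succ : ℤ) - q j.succ) = 1 := by
  rw [prod_pow_eq_pow_sum_mul_prod_dehomogenize, prod_pow_eq_pow_sum_mul_prod_dehomogenize, h,
    mul_right_inj, ← div_eq_one]
  simp [zpow_sub, ← div_eq_mul_inv, Finset.prod_div_distrib]

end Dehomogenize

/-- Row `i` is the exponent vector of the ratio of the monomials of rows `i` and `i + 1` of `p`
in the coordinates `λⱼ / λ₀`. -/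
def consecutiveRowDiff {n : ℕ} (p : Fin (n + 1) → Fin (n + 1) → ℕ) : Matrix (Fin n) (Fin n) ℤ :=
  Matrix.of fun i j => (p i.castSucc j.succ : ℤ) - p i.succ j.succ

lemma dehomogenize_mem_ker_monomialHom_iff {G : Type*} [CommGroup G] {n d : ℕ}
    {p : Fin (n + 1) → Fin (n + 1) → ℕ} (hrow : ∀ i, ∑ j, p i j = d) (x : Fin (n + 1) → G) :
    dehomogenize n x ∈ (monomialHom (consecutiveRowDiff p)).ker ↔
      ∀ i : Fin n, ∏ j, x j ^ p i.castSucc j = ∏ j, x j ^ p i.succ j := by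
  rw [mem_ker_monomialHom]
  exact forall_congr' fun i => (prod_pow_eq_prod_pow_iff x ((hrow _).trans (hrow _).symm)).symm

lemma det_eq_mul_det_consecutiveRowDiff {d : ℕ} {p : Fin 3 → Fin 3 → ℕ}
    (hrow : ∀ i, p i 0 + p i 1 + p i 2 = d) :
    (Matrix.of fun i j => (p i j : ℤ)).det = d * (consecutiveRowDiff p).det := by
  have hrowℤ (i : Fin 3) : (p i 0 : ℤ) = d - p i 1 - p i 2 := by
    rw [← hrow i]
    push_cast
    ring
  simp only [Matrix.det_fin_three, Matrix.det_fin_two, consecutiveRowDiff, Matrix.of_apply, hrowℤ,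
    Fin.castSucc_zero, Fin.succ_zero_eq_one, Fin.castSucc_one, Fin.succ_one_eq_two]
  ring

theorem diagonal_automorphism_group_order_general
    (d : ℕ)
    (p : Fin 3 → Fin 3 → ℕ)
    (hrow : ∀ i, p i 0 + p i 1 + p i 2 = d)
    (hdet : (Matrix.of fun i j : Fin 3 => (p i j : ℤ)).det ≠ 0)
    (H : Subgroup (Fin 3 → ℂˣ))
    (hH : ∀ lam : Fin 3 → ℂˣ, lam ∈ H ↔
      (lam 0 ^ p 0 0 * lam 1 ^ p 0 1 * lam 2 ^ p 0 2
          = lam 0 ^ p 1 0 * lam 1 ^ p 1 1 * lam 2 ^ p 1 2 ∧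
        lam 0 ^ p 1 0 * lam 1 ^ p 1 1 * lam 2 ^ p 1 2
          = lam 0 ^ p 2 0 * lam 1 ^ p 2 1 * lam 2 ^ p 2 2))
    (S : Subgroup (Fin 3 → ℂˣ))
    (hS : ∀ lam : Fin 3 → ℂˣ, lam ∈ S ↔ ∃ l : ℂˣ, lam = fun _ => l) :
    Nat.card (H ⧸ S.subgroupOf H)
      = (Matrix.of fun i j : Fin 3 => (p i j : ℤ)).det.natAbs / d := by
  have hΔ := det_eq_mul_det_consecutiveRowDiff hrow
  obtain ⟨hd, hM⟩ := mul_ne_zero_iff.mp (hΔ ▸ hdet)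
  have hH' : H = (monomialHom (consecutiveRowDiff p)).ker.comap (dehomogenize 2) := by
    ext lam
    rw [hH, Subgroup.mem_comap, dehomogenize_mem_ker_monomialHom_iff (d := d)
      (by simpa [Fin.sum_univ_three] using hrow)]
    simp [Fin.forall_fin_two, Fin.prod_univ_three]
  have hS' : S = (dehomogenize 2).ker := by
    ext lam
    rw [hS, mem_ker_dehomogenize]
  subst hH' hS'
  rw [MonoidHom.card_comap_quotient_ker dehomogenize_surjective,
    Complex.card_ker_monomialHom_fin_two hM, hΔ, Int.natAbs_mul, Int.natAbs_natCast,
    Nat.mul_div_cancel_left _ (by omega)]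

/-- For a 3×3 power matrix `p` with all row sums `d ≥ 1` and nonzero
integer determinant `Δ`, the group `H` of diagonal triples `(λ₁,λ₂,λ₃) ∈ (ℂˣ)³`
multiplying all three monomials by a common factor, modulo the subgroup `S` of scalar
triples, is finite of order `|Δ|/d`. -/
theorem diagonal_automorphism_group_order
    (d : ℕ) (hd : 1 ≤ d)
    (p : Fin 3 → Fin 3 → ℕ)
    (hrow : ∀ i, p i 0 + p i 1 + p i 2 = d)
    (hdet : (Matrix.of fun i j : Fin 3 => (p i j : ℤ)).det ≠ 0)
    (H : Subgroup (Fin 3 → ℂˣ))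
    (hH : ∀ lam : Fin 3 → ℂˣ, lam ∈ H ↔
      (lam 0 ^ p 0 0 * lam 1 ^ p 0 1 * lam 2 ^ p 0 2
          = lam 0 ^ p 1 0 * lam 1 ^ p 1 1 * lam 2 ^ p 1 2 ∧
        lam 0 ^ p 1 0 * lam 1 ^ p 1 1 * lam 2 ^ p 1 2
          = lam 0 ^ p 2 0 * lam 1 ^ p 2 1 * lam 2 ^ p 2 2))
    (S : Subgroup (Fin 3 → ℂˣ))
    (hS : ∀ lam : Fin 3 → ℂˣ, lam ∈ S ↔ ∃ l : ℂˣ, lam = fun _ => l) :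
    Nat.card (H ⧸ S.subgroupOf H)
      = (Matrix.of fun i j : Fin 3 => (p i j : ℤ)).det.natAbs / d :=
  diagonal_automorphism_group_order_general d p hrow hdet H hH S hS
end

section
/- Let F = A·x^{a₁}y^{b₁}z^{c₁} + B·x^{a₂}y^{b₂}z^{c₂} ∈ ℂ[x,y,z] be a homogeneous polynomial of degree d ≥ 3 that is the sum of exactly two distinct monomials with nonzero coefficients A, B. Then F is reducible in ℂ[x,y,z], or the curve F = 0 has a singular point: there exists a nonzero (x₀,y₀,z₀) ∈ ℂ³ at which F, ∂F/∂x, ∂F/∂y, ∂F/∂z all vanish. (Hence no smooth irreducible projective plane curve of degree at least 3 admits a two-term equation.) -/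
open MvPolynomial

lemma key1_s17 (a b : ℕ) (h : 2 ≤ a + b) : (0:ℂ) ^ a * 0 ^ b = 0 := by
  rw [← pow_add]; exact zero_pow (by omega)

lemma keyD (a b : ℕ) (h : 2 ≤ a + b) : (0:ℂ) ^ b * ((a:ℂ) * 0 ^ (a-1)) = 0 := by
  rcases a with _|n
  · simp
  · rw [Nat.succ_sub_one, mul_comm ((n+1 : ℕ):ℂ), ← mul_assoc, ← pow_add,
      zero_pow (by omega : b + n ≠ 0), zero_mul]

lemma keyE (a b c : ℕ) (h : 2 ≤ b + c) : (0:ℂ) ^ c * ((0:ℂ) ^ b * (a:ℂ)) = 0 := by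
  rw [← mul_assoc, ← pow_add, zero_pow (by omega : c + b ≠ 0), zero_mul]

lemma sing0 (A B : ℂ) (a₁ b₁ c₁ a₂ b₂ c₂ : ℕ)
    (h₁ : 2 ≤ b₁ + c₁) (h₂ : 2 ≤ b₂ + c₂)
    (F : MvPolynomial (Fin 3) ℂ)
    (hF : F = C A * (X 0 ^ a₁ * X 1 ^ b₁ * X 2 ^ c₁)
            + C B * (X 0 ^ a₂ * X 1 ^ b₂ * X 2 ^ c₂)) :
    ∃ v : Fin 3 → ℂ, v ≠ 0 ∧ eval v F = 0 ∧ ∀ i, eval v (pderiv i F) = 0 := by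
  refine ⟨![1,0,0], by intro h; simpa using congrFun h 0, ?_, ?_⟩
  · simp [hF]
    rw [key1_s17 _ _ h₁, key1_s17 _ _ h₂]; ring
  · intro i
    fin_cases i <;> simp [hF, pderiv_C_mul, pderiv_mul, pderiv_pow]
    · rw [keyE a₁ _ _ h₁, keyE a₂ _ _ h₂]; ring
    · rw [keyD _ _ h₁, keyD _ _ h₂]; ring
    · rw [keyD _ _ (by omega : 2 ≤ c₁ + b₁), keyD _ _ (by omega : 2 ≤ c₂ + b₂)]; ring

lemma sing1 (A B : ℂ) (a₁ b₁ c₁ a₂ b₂ c₂ : ℕ)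
    (h₁ : 2 ≤ a₁ + c₁) (h₂ : 2 ≤ a₂ + c₂)
    (F : MvPolynomial (Fin 3) ℂ)
    (hF : F = C A * (X 0 ^ a₁ * X 1 ^ b₁ * X 2 ^ c₁)
            + C B * (X 0 ^ a₂ * X 1 ^ b₂ * X 2 ^ c₂)) :
    ∃ v : Fin 3 → ℂ, v ≠ 0 ∧ eval v F = 0 ∧ ∀ i, eval v (pderiv i F) = 0 := by
  refine ⟨![0,1,0], by intro h; simpa using congrFun h 1, ?_, ?_⟩
  · simp [hF]
    rw [key1_s17 _ _ h₁, key1_s17 _ _ h₂]; ring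
  · intro i
    fin_cases i <;> simp [hF, pderiv_C_mul, pderiv_mul, pderiv_pow]
    · rw [keyD _ _ h₁, keyD _ _ h₂]; ring
    · rw [keyE b₁ _ _ h₁, keyE b₂ _ _ h₂]; ring
    · rw [keyD _ _ (by omega : 2 ≤ c₁ + a₁), keyD _ _ (by omega : 2 ≤ c₂ + a₂)]; ring

lemma sing2 (A B : ℂ) (a₁ b₁ c₁ a₂ b₂ c₂ : ℕ)
    (h₁ : 2 ≤ a₁ + b₁) (h₂ : 2 ≤ a₂ + b₂)
    (F : MvPolynomial (Fin 3) ℂ)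
    (hF : F = C A * (X 0 ^ a₁ * X 1 ^ b₁ * X 2 ^ c₁)
            + C B * (X 0 ^ a₂ * X 1 ^ b₂ * X 2 ^ c₂)) :
    ∃ v : Fin 3 → ℂ, v ≠ 0 ∧ eval v F = 0 ∧ ∀ i, eval v (pderiv i F) = 0 := by
  refine ⟨![0,0,1], by intro h; simpa using congrFun h 2, ?_, ?_⟩
  · simp [hF]
    rw [key1_s17 _ _ h₁, key1_s17 _ _ h₂]; ring
  · intro i
    fin_cases i <;> simp [hF, pderiv_C_mul, pderiv_mul, pderiv_pow]
    · rw [keyD _ _ h₁, keyD _ _ h₂]; ring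
    · rw [keyD _ _ (by omega : 2 ≤ b₁ + a₁), keyD _ _ (by omega : 2 ≤ b₂ + a₂)]; ring
    · rw [key1_s17 _ _ h₁, key1_s17 _ _ h₂]; ring

/-- A homogeneous polynomial of degree `d ≥ 3` that is the sum of exactly
two distinct monomials with nonzero coefficients is reducible, or the curve it defines
has a singular point. -/
theorem two_term_reducible_or_singular
    (d a₁ b₁ c₁ a₂ b₂ c₂ : ℕ) (hd : 3 ≤ d)
    (A B : ℂ) (hA : A ≠ 0) (hB : B ≠ 0)
    (hdist : (a₁, b₁, c₁) ≠ (a₂, b₂, c₂))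
    (hdeg₁ : a₁ + b₁ + c₁ = d) (hdeg₂ : a₂ + b₂ + c₂ = d)
    (F : MvPolynomial (Fin 3) ℂ)
    (hF : F = C A * (X 0 ^ a₁ * X 1 ^ b₁ * X 2 ^ c₁)
            + C B * (X 0 ^ a₂ * X 1 ^ b₂ * X 2 ^ c₂)) :
    ¬ Irreducible F ∨
      ∃ v : Fin 3 → ℂ, v ≠ 0 ∧ eval v F = 0 ∧ ∀ i, eval v (pderiv i F) = 0 := by
  have key : (2 ≤ b₁ + c₁ ∧ 2 ≤ b₂ + c₂) ∨ (2 ≤ a₁ + c₁ ∧ 2 ≤ a₂ + c₂) ∨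
      (2 ≤ a₁ + b₁ ∧ 2 ≤ a₂ + b₂) := by omega
  rcases key with ⟨h₁, h₂⟩ | ⟨h₁, h₂⟩ | ⟨h₁, h₂⟩
  · exact Or.inr (sing0 A B a₁ b₁ c₁ a₂ b₂ c₂ h₁ h₂ F hF)
  · exact Or.inr (sing1 A B a₁ b₁ c₁ a₂ b₂ c₂ h₁ h₂ F hF)
  · exact Or.inr (sing2 A B a₁ b₁ c₁ a₂ b₂ c₂ h₁ h₂ F hF)
end
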